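/- arXiv:1710.06261 — 8 statements merged into one kernel-verified Lean document; each statement's English description precedes it below -/
import Mathlib

section
/- Let H : ℝ^n × ℝ^n → ℝ be twice continuously differentiable and let (x(t), y(t)) follow a Hamiltonian curve for H on [0, T]. Let M(t) be the 2n × 2n block matrix [[H_{yx}, H_{yy}], [−H_{xx}, −H_{xy}]] whose blocks are the second partial derivative matrices of H evaluated at (x(t), y(t)) (so (H_{yx})_{ij} = ∂²H/∂y_i∂x_j, (H_{yy})_{ij} = ∂²H/∂y_i∂y_j, (H_{xx})_{ij} = ∂²H/∂x_i∂x_j, (H_{xy})_{ij} = ∂²H/∂x_i∂y_j). If Φ : [0, T] → ℝ^{2n×2n} is differentiable with Φ'(t) = M(t)Φ(t) for all t ∈ [0, T] and Φ(0) = I, then det Φ(t) = 1 for all t ∈ [0, T]. (In particular, the Jacobian of the time-t Hamiltonian flow map has determinant 1, so the flow preserves Lebesgue measure.) -/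
/-!
By Jacobi's formula, `Φ' = M Φ` gives `(det Φ)' = tr M · det Φ`. The trace of `M` is
`tr H_yx - tr H_xy`, which vanishes by the symmetry of second derivatives of a `C²` function,
so `det Φ` is constant on `[0, T]` and equals `det Φ(0) = 1`.
-/

open Set Matrix

/-- The second partial derivative of `H` at `p`, first in direction `v`, then in
direction `u`: `D_u D_v H (p)`. -/
noncomputable def secondPartial (n : ℕ)
    (H : EuclideanSpace ℝ (Fin n) × EuclideanSpace ℝ (Fin n) → ℝ)
    (p u v : EuclideanSpace ℝ (Fin n) × EuclideanSpace ℝ (Fin n)) : ℝ :=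
  fderiv ℝ (fun q => fderiv ℝ H q v) p u

namespace Matrix

variable {ι : Type*} [Fintype ι] [DecidableEq ι]

theorem det_updateRow_eq_sum_perm {R : Type*} [CommRing R] (A : Matrix ι ι R) (i : ι)
    (r : ι → R) :
    (A.updateRow i r).det = ∑ σ : Equiv.Perm ι,
      (Equiv.Perm.sign σ : R) * (r (σ i) * ∏ j ∈ Finset.univ.erase i, A j (σ j)) := by
  rw [← det_transpose, det_apply']
  refine Finset.sum_congr rfl fun σ _ => ?_
  rw [← Finset.mul_prod_erase Finset.univ _ (Finset.mem_univ i)]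
  congr 2
  · simp
  · exact Finset.prod_congr rfl fun j hj => by simp [Finset.ne_of_mem_erase hj]

theorem sum_det_updateRow_mul {R : Type*} [CommRing R] (N P : Matrix ι ι R) :
    ∑ i, (P.updateRow i ((N * P) i)).det = N.trace * P.det := by
  have hrow : ∀ i, (N * P) i = ∑ k, N i k • P k := fun i => by ext j; simp [mul_apply]
  simp_rw [hrow, det_updateRow_sum, smul_eq_mul, trace, diag, Finset.sum_mul]

theorem trace_fromBlocks {m n R : Type*} [Fintype m] [Fintype n] [AddCommMonoid R]
    (A : Matrix m m R) (B : Matrix m n R) (C : Matrix n m R) (D : Matrix n n R) :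
    (fromBlocks A B C D).trace = A.trace + D.trace := by
  simp [trace, Fintype.sum_sum_type]

end Matrix

section Jacobi

variable {𝕜 R ι : Type*} [NontriviallyNormedField 𝕜] [NormedCommRing R] [NormedAlgebra 𝕜 R]
  [Fintype ι] [DecidableEq ι] {Φ : 𝕜 → Matrix ι ι R} {t : 𝕜}

theorem hasDerivAt_det {Φ' : Matrix ι ι R}
    (h : ∀ i j, HasDerivAt (fun s => Φ s i j) (Φ' i j) t) :
    HasDerivAt (fun s => (Φ s).det) (∑ i, ((Φ t).updateRow i (Φ' i)).det) t := by
  have hdet : ∀ s, (Φ s).det = ∑ σ : Equiv.Perm ι, (Equiv.Perm.sign σ : R) * ∏ i, Φ s i (σ i) :=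
    fun s => by rw [← det_transpose, det_apply']; rfl
  simp_rw [hdet, det_updateRow_eq_sum_perm]
  refine (HasDerivAt.fun_sum fun σ _ => (HasDerivAt.fun_finsetProd fun i _ => h i (σ i)).const_mul
    (Equiv.Perm.sign σ : R)).congr_deriv ?_
  rw [Finset.sum_comm]
  simp_rw [Finset.mul_sum, smul_eq_mul, mul_comm (Φ' _ _)]

theorem hasDerivAt_det_of_hasDerivAt_mul {N : Matrix ι ι R}
    (h : ∀ i j, HasDerivAt (fun s => Φ s i j) ((N * Φ t) i j) t) :
    HasDerivAt (fun s => (Φ s).det) (N.trace * (Φ t).det) t := by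
  simpa only [sum_det_updateRow_mul] using hasDerivAt_det h

end Jacobi

theorem det_eq_of_hasDerivAt_mul_of_trace_eq_zero {R ι : Type*} [NormedCommRing R]
    [NormedAlgebra ℝ R] [Fintype ι] [DecidableEq ι] {a b : ℝ} {Φ N : ℝ → Matrix ι ι R}
    (hΦ : ∀ t ∈ Icc a b, ∀ i j, HasDerivAt (fun s => Φ s i j) ((N t * Φ t) i j) t)
    (hN : ∀ t ∈ Icc a b, (N t).trace = 0) :
    ∀ t ∈ Icc a b, (Φ t).det = (Φ a).det := by
  have hderiv : ∀ t ∈ Icc a b, HasDerivAt (fun s => (Φ s).det) 0 t := fun t ht => by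
    simpa only [hN t ht, zero_mul] using hasDerivAt_det_of_hasDerivAt_mul (hΦ t ht)
  exact constant_of_has_deriv_right_zero
    (fun t ht => (hderiv t ht).continuousAt.continuousWithinAt)
    (fun t ht => (hderiv t (Ico_subset_Icc_self ht)).hasDerivWithinAt)

section SecondDerivative

variable {𝕜 E F : Type*} [RCLike 𝕜] [NormedAddCommGroup E] [NormedSpace 𝕜 E]
  [NormedAddCommGroup F] [NormedSpace 𝕜 F] {f : E → F} {p : E}

theorem fderiv_fderiv_apply_const (hf : DifferentiableAt 𝕜 (fderiv 𝕜 f) p) (u v : E) :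
    fderiv 𝕜 (fun q => fderiv 𝕜 f q v) p u = fderiv 𝕜 (fderiv 𝕜 f) p u v := by
  rw [fderiv_clm_apply hf (differentiableAt_const v)]
  simp

theorem fderiv_fderiv_apply_comm (hf : ContDiffAt 𝕜 2 f p) (u v : E) :
    fderiv 𝕜 (fun q => fderiv 𝕜 f q v) p u = fderiv 𝕜 (fun q => fderiv 𝕜 f q u) p v := by
  have hdiff : DifferentiableAt 𝕜 (fderiv 𝕜 f) p :=
    (hf.fderiv_right (m := 1) le_rfl).differentiableAt one_ne_zero
  rw [fderiv_fderiv_apply_const hdiff, fderiv_fderiv_apply_const hdiff]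
  exact (hf.isSymmSndFDerivAt (by simp)).eq u v

end SecondDerivative

/-- The Jacobian at `p` of the Hamiltonian vector field `(∂H/∂y, -∂H/∂x)`. -/
noncomputable def hamiltonianJacobian (n : ℕ)
    (H : EuclideanSpace ℝ (Fin n) × EuclideanSpace ℝ (Fin n) → ℝ)
    (p : EuclideanSpace ℝ (Fin n) × EuclideanSpace ℝ (Fin n)) :
    Matrix (Fin n ⊕ Fin n) (Fin n ⊕ Fin n) ℝ :=
  fromBlocks
    (of fun i j =>
      secondPartial n H p (0, EuclideanSpace.single i 1) (EuclideanSpace.single j 1, 0))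
    (of fun i j =>
      secondPartial n H p (0, EuclideanSpace.single i 1) (0, EuclideanSpace.single j 1))
    (of fun i j =>
      -secondPartial n H p (EuclideanSpace.single i 1, 0) (EuclideanSpace.single j 1, 0))
    (of fun i j =>
      -secondPartial n H p (EuclideanSpace.single i 1, 0) (0, EuclideanSpace.single j 1))

theorem trace_hamiltonianJacobian {n : ℕ}
    {H : EuclideanSpace ℝ (Fin n) × EuclideanSpace ℝ (Fin n) → ℝ}
    {p : EuclideanSpace ℝ (Fin n) × EuclideanSpace ℝ (Fin n)} (hH : ContDiffAt ℝ 2 H p) :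
    (hamiltonianJacobian n H p).trace = 0 := by
  rw [hamiltonianJacobian, trace_fromBlocks]
  simp only [trace, diag, of_apply, Finset.sum_neg_distrib]
  rw [add_neg_eq_zero]
  exact Finset.sum_congr rfl fun i _ => fderiv_fderiv_apply_comm hH _ _

theorem hamiltonian_flow_jacobian_det_one_general
    (n : ℕ) (T : ℝ)
    (H : EuclideanSpace ℝ (Fin n) × EuclideanSpace ℝ (Fin n) → ℝ)
    (hH : ContDiff ℝ 2 H)
    (x y : ℝ → EuclideanSpace ℝ (Fin n))
    (M : ℝ → Matrix (Fin n ⊕ Fin n) (Fin n ⊕ Fin n) ℝ)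
    (hM : ∀ t, M t = Matrix.fromBlocks
      (Matrix.of fun i j => secondPartial n H (x t, y t)
        (0, EuclideanSpace.single i 1) (EuclideanSpace.single j 1, 0))
      (Matrix.of fun i j => secondPartial n H (x t, y t)
        (0, EuclideanSpace.single i 1) (0, EuclideanSpace.single j 1))
      (Matrix.of fun i j => -secondPartial n H (x t, y t)
        (EuclideanSpace.single i 1, 0) (EuclideanSpace.single j 1, 0))
      (Matrix.of fun i j => -secondPartial n H (x t, y t)
        (EuclideanSpace.single i 1, 0) (0, EuclideanSpace.single j 1)))
    (Φ : ℝ → Matrix (Fin n ⊕ Fin n) (Fin n ⊕ Fin n) ℝ)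
    (hΦ : ∀ t ∈ Icc 0 T, ∀ i j, HasDerivAt (fun s => Φ s i j) ((M t * Φ t) i j) t)
    (hΦ0 : Φ 0 = 1) :
    ∀ t ∈ Icc 0 T, (Φ t).det = 1 := by
  have htrace : ∀ t ∈ Icc 0 T, (M t).trace = 0 := fun t _ => by
    rw [hM t]
    exact trace_hamiltonianJacobian hH.contDiffAt
  simpa only [hΦ0, det_one] using det_eq_of_hasDerivAt_mul_of_trace_eq_zero hΦ htrace

/-- The linearization (variational equation) of a Hamiltonian flow has
Jacobian with determinant one: if `Φ' = M Φ`, `Φ 0 = I`, with `M` the block matrix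
`[[H_yx, H_yy], [-H_xx, -H_xy]]` along a Hamiltonian curve, then `det (Φ t) = 1`. -/
theorem hamiltonian_flow_jacobian_det_one
    (n : ℕ) (T : ℝ) (hT : 0 ≤ T)
    (H : EuclideanSpace ℝ (Fin n) × EuclideanSpace ℝ (Fin n) → ℝ)
    (hH : ContDiff ℝ 2 H)
    (x y : ℝ → EuclideanSpace ℝ (Fin n))
    (hx : ∀ t ∈ Icc 0 T, HasDerivAt x (gradient (fun v => H (x t, v)) (y t)) t)
    (hy : ∀ t ∈ Icc 0 T, HasDerivAt y (-(gradient (fun u => H (u, y t)) (x t))) t)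
    (M : ℝ → Matrix (Fin n ⊕ Fin n) (Fin n ⊕ Fin n) ℝ)
    (hM : ∀ t, M t = Matrix.fromBlocks
      (Matrix.of fun i j => secondPartial n H (x t, y t)
        (0, EuclideanSpace.single i 1) (EuclideanSpace.single j 1, 0))
      (Matrix.of fun i j => secondPartial n H (x t, y t)
        (0, EuclideanSpace.single i 1) (0, EuclideanSpace.single j 1))
      (Matrix.of fun i j => -secondPartial n H (x t, y t)
        (EuclideanSpace.single i 1, 0) (EuclideanSpace.single j 1, 0))
      (Matrix.of fun i j => -secondPartial n H (x t, y t)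
        (EuclideanSpace.single i 1, 0) (0, EuclideanSpace.single j 1)))
    (Φ : ℝ → Matrix (Fin n ⊕ Fin n) (Fin n ⊕ Fin n) ℝ)
    (hΦ : ∀ t ∈ Icc 0 T, ∀ i j, HasDerivAt (fun s => Φ s i j) ((M t * Φ t) i j) t)
    (hΦ0 : Φ 0 = 1) :
    ∀ t ∈ Icc 0 T, (Φ t).det = 1 :=
  hamiltonian_flow_jacobian_det_one_general n T H hH x y M hM Φ hΦ hΦ0
end

section
/- Suppose (x(t), v(t)) follows a Hamiltonian curve for H(x, v) = f(x) + (1/2) log((2π)^n det g(x)) + (1/2) vᵀ g(x)⁻¹ v on an interval, with x(t) ∈ M for all t. Then x'(t) = g(x(t))⁻¹ v(t), and x(t) satisfies the second-order ODE x''(t) = − g(x)⁻¹ (Dg(x)[x'(t)]) x'(t) + (1/2) g(x)⁻¹ w(t) − g(x)⁻¹ ∇f(x) − (1/2) g(x)⁻¹ τ(x), where all terms are evaluated at x = x(t), (Dg(x)[u])_{ij} = Σ_k u_k ∂g_{ij}/∂x_k, w(t) is the vector with entries w_k = x'(t)ᵀ (∂g/∂x_k)(x(t)) x'(t), and τ(x)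 is the vector with entries τ_k = tr(g(x)⁻¹ ∂g/∂x_k (x)). -/
open Set Matrix Real


lemma clm_apply_eq_sum {n : ℕ} (L : (Fin n → ℝ) →L[ℝ] ℝ) (u : Fin n → ℝ) :
    L u = ∑ l, u l * L (Pi.single l 1) := by
  have hu : u = ∑ l, u l • (Pi.single l (1:ℝ) : Fin n → ℝ) := by
    funext j
    simp [Pi.single_apply, Finset.sum_apply]
  conv_lhs => rw [hu]
  simp [smul_eq_mul]

lemma quad_hasFDerivAt {n : ℕ} (A : Matrix (Fin n) (Fin n) ℝ) (v : Fin n → ℝ) :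
    HasFDerivAt (fun w : Fin n → ℝ => w ⬝ᵥ A.mulVec w)
      (∑ i, ∑ j, (v i • (A i j • (ContinuousLinearMap.proj j : (Fin n → ℝ) →L[ℝ] ℝ))
        + (A i j * v j) • (ContinuousLinearMap.proj i : (Fin n → ℝ) →L[ℝ] ℝ))) v := by
  have hfun : (fun w : Fin n → ℝ => w ⬝ᵥ A.mulVec w)
      = fun w => ∑ i, ∑ j, w i * (A i j * w j) := by
    funext w
    simp [dotProduct, mulVec, Finset.mul_sum]
  rw [hfun]
  exact HasFDerivAt.fun_sum fun i _ => HasFDerivAt.fun_sum fun j _ =>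
    (hasFDerivAt_apply i v).mul ((hasFDerivAt_apply j v).const_mul (A i j))

lemma quad_fderiv_apply {n : ℕ} (A : Matrix (Fin n) (Fin n) ℝ) (hA : Aᵀ = A)
    (v : Fin n → ℝ) (C : ℝ) (k : Fin n) :
    fderiv ℝ (fun w : Fin n → ℝ => C + (1/2) * (w ⬝ᵥ A.mulVec w)) v (Pi.single k 1)
      = A.mulVec v k := by
  have h := ((quad_hasFDerivAt A v).const_mul (1/2 : ℝ)).const_add C
  rw [h.fderiv]
  have hsymm : ∀ i, A i k = A k i := fun i => by
    conv_lhs => rw [← hA, Matrix.transpose_apply]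
  simp only [ContinuousLinearMap.smul_apply, ContinuousLinearMap.sum_apply,
    ContinuousLinearMap.add_apply, ContinuousLinearMap.proj_apply, Pi.single_apply,
    smul_eq_mul, mul_ite, mul_one, mul_zero, Finset.sum_add_distrib,
    Finset.sum_ite_eq', Finset.mem_univ, if_true]
  have h2 : (∑ x : Fin n, ∑ y : Fin n, if x = k then A x y * v y else 0)
      = ∑ y, A k y * v y := by
    rw [Finset.sum_comm]
    simp [Finset.sum_ite_eq']
  rw [h2]
  simp only [mulVec, dotProduct]
  have : ∑ i, v i * A i k = ∑ i, A k i * v i := by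
    refine Finset.sum_congr rfl fun i _ => ?_
    rw [hsymm i, mul_comm]
  rw [this]
  ring

lemma det_hasFDerivAt {n : ℕ} {A : (Fin n → ℝ) → Matrix (Fin n) (Fin n) ℝ} {p : Fin n → ℝ}
    (h : ∀ i j, DifferentiableAt ℝ (fun z => A z i j) p) :
    HasFDerivAt (fun z => (A z).det)
      (∑ σ : Equiv.Perm (Fin n), ((Equiv.Perm.sign σ : ℤ) : ℝ) •
        ∑ i, (∏ j ∈ Finset.univ.erase i, A p (σ j) j) •
          fderiv ℝ (fun z => A z (σ i) i) p) p := by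
  have hfun : (fun z => (A z).det)
      = fun z => ∑ σ : Equiv.Perm (Fin n), ((Equiv.Perm.sign σ : ℤ) : ℝ) *
          ∏ i, A z (σ i) i := by
    funext z
    rw [Matrix.det_apply']
  rw [hfun]
  exact HasFDerivAt.fun_sum fun σ _ =>
    (HasFDerivAt.finset_prod (fun i _ => (h (σ i) i).hasFDerivAt)).const_mul _

lemma det_fderiv_apply {n : ℕ} {A : (Fin n → ℝ) → Matrix (Fin n) (Fin n) ℝ} {p : Fin n → ℝ}
    (hdet : IsUnit (A p).det) (u : Fin n → ℝ) :
    (∑ σ : Equiv.Perm (Fin n), ((Equiv.Perm.sign σ : ℤ) : ℝ) •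
        ∑ i, (∏ j ∈ Finset.univ.erase i, A p (σ j) j) •
          fderiv ℝ (fun z => A z (σ i) i) p) u
      = (A p).det * ((A p)⁻¹ *
          Matrix.of fun i j => fderiv ℝ (fun z => A z i j) p u).trace := by
  set X : Matrix (Fin n) (Fin n) ℝ := Matrix.of fun i j => fderiv ℝ (fun z => A z i j) p u
    with hX
  have step1 : (∑ σ : Equiv.Perm (Fin n), ((Equiv.Perm.sign σ : ℤ) : ℝ) •
        ∑ i, (∏ j ∈ Finset.univ.erase i, A p (σ j) j) •
          fderiv ℝ (fun z => A z (σ i) i) p) u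
      = ∑ i, ((A p).updateCol i (fun r => X r i)).det := by
    simp only [ContinuousLinearMap.sum_apply, ContinuousLinearMap.smul_apply, smul_eq_mul,
      Finset.mul_sum]
    rw [Finset.sum_comm]
    refine Finset.sum_congr rfl fun i _ => ?_
    rw [Matrix.det_apply']
    refine Finset.sum_congr rfl fun σ _ => ?_
    rw [← Finset.mul_prod_erase Finset.univ _ (Finset.mem_univ i)]
    have hupd : ∀ j ∈ Finset.univ.erase i,
        ((A p).updateCol i fun r => X r i) (σ j) j = A p (σ j) j := by
      intro j hj
      rw [Matrix.updateCol_apply, if_neg (Finset.mem_erase.mp hj).1]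
    rw [Finset.prod_congr rfl hupd, Matrix.updateCol_apply, if_pos rfl]
    simp only [hX, Matrix.of_apply]
    ring
  rw [step1]
  have hc : ∀ b : Fin n → ℝ, Matrix.cramer (A p) b = (A p).det • (A p)⁻¹.mulVec b := by
    intro b
    have h1 : (A p)⁻¹.mulVec ((A p).mulVec (Matrix.cramer (A p) b))
        = Matrix.cramer (A p) b := by
      rw [Matrix.mulVec_mulVec, Matrix.nonsing_inv_mul _ hdet, Matrix.one_mulVec]
    rw [Matrix.mulVec_cramer, Matrix.mulVec_smul] at h1
    exact h1.symm
  have step2 : ∀ i, ((A p).updateCol i (fun r => X r i)).det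
      = (A p).det * ((A p)⁻¹.mulVec (fun r => X r i)) i := by
    intro i
    rw [← Matrix.cramer_apply, hc]
    simp [smul_eq_mul]
  simp only [step2, ← Finset.mul_sum]
  simp [Matrix.trace, Matrix.diag, Matrix.mul_apply, Matrix.mulVec, dotProduct]

lemma det_diffAt {n : ℕ} {A : (Fin n → ℝ) → Matrix (Fin n) (Fin n) ℝ} {p : Fin n → ℝ}
    (h : ∀ i j, DifferentiableAt ℝ (fun z => A z i j) p) :
    DifferentiableAt ℝ (fun z => (A z).det) p :=
  (det_hasFDerivAt h).differentiableAt

lemma inv_entry_diffAt {n : ℕ} {A : (Fin n → ℝ) → Matrix (Fin n) (Fin n) ℝ} {p : Fin n → ℝ}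
    (h : ∀ i j, DifferentiableAt ℝ (fun z => A z i j) p)
    (hdet : (A p).det ≠ 0) (i j : Fin n) :
    DifferentiableAt ℝ (fun z => (A z)⁻¹ i j) p := by
  have hfun : (fun z => (A z)⁻¹ i j)
      = fun z => ((A z).det)⁻¹ * ((A z).updateRow j (Pi.single i 1)).det := by
    funext z
    rw [Matrix.inv_def, Ring.inverse_eq_inv, Matrix.smul_apply, smul_eq_mul,
      Matrix.adjugate_apply]
  rw [hfun]
  refine DifferentiableAt.mul ((det_diffAt h).inv hdet) (det_diffAt fun a b => ?_)
  have : (fun z => ((A z).updateRow j (Pi.single i 1)) a b)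
      = fun z => if a = j then (Pi.single i 1 : Fin n → ℝ) b else A z a b := by
    funext z; rw [Matrix.updateRow_apply]
  rw [this]
  by_cases hab : a = j <;> simp [hab, h a b]

lemma inv_fderiv_eq {n : ℕ} {g : (Fin n → ℝ) → Matrix (Fin n) (Fin n) ℝ}
    {M : Set (Fin n → ℝ)} (hM : IsOpen M) {p : Fin n → ℝ} (hp : p ∈ M)
    (h : ∀ i j, DifferentiableAt ℝ (fun z => g z i j) p)
    (hunit : ∀ q ∈ M, IsUnit (g q).det) (u : Fin n → ℝ) :
    (Matrix.of fun i j => fderiv ℝ (fun z => (g z)⁻¹ i j) p u)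
      = -((g p)⁻¹ * (Matrix.of fun i j => fderiv ℝ (fun z => g z i j) p u) * (g p)⁻¹) := by
  set X : Matrix (Fin n) (Fin n) ℝ := Matrix.of fun i j => fderiv ℝ (fun z => g z i j) p u
    with hXdef
  set DB : Matrix (Fin n) (Fin n) ℝ :=
    Matrix.of fun i j => fderiv ℝ (fun z => (g z)⁻¹ i j) p u with hDBdef
  have hBd : ∀ i j, DifferentiableAt ℝ (fun z => (g z)⁻¹ i j) p :=
    inv_entry_diffAt h (hunit p hp).ne_zero
  have key : DB * g p = -((g p)⁻¹ * X) := by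
    ext i j
    have hconst : (fun z => ∑ l, (g z)⁻¹ i l * g z l j)
        =ᶠ[nhds p] fun _ => (1 : Matrix (Fin n) (Fin n) ℝ) i j := by
      filter_upwards [hM.mem_nhds hp] with q hq
      have h1 : (g q)⁻¹ * g q = 1 := Matrix.nonsing_inv_mul _ (hunit q hq)
      calc ∑ l, (g q)⁻¹ i l * g q l j = ((g q)⁻¹ * g q) i j := (Matrix.mul_apply).symm
        _ = (1 : Matrix (Fin n) (Fin n) ℝ) i j := by rw [h1]
    have h0 : fderiv ℝ (fun z => ∑ l, (g z)⁻¹ i l * g z l j) p = 0 := by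
      rw [hconst.fderiv_eq]; exact fderiv_const_apply _
    have hsum : fderiv ℝ (fun z => ∑ l, (g z)⁻¹ i l * g z l j) p
        = ∑ l, ((g p)⁻¹ i l • fderiv ℝ (fun z => g z l j) p
            + g p l j • fderiv ℝ (fun z => (g z)⁻¹ i l) p) := by
      rw [fderiv_fun_sum fun l _ => (hBd i l).fun_mul (h l j)]
      exact Finset.sum_congr rfl fun l _ => fderiv_fun_mul (hBd i l) (h l j)
    have hu := congrArg (fun L => L u) (h0.symm.trans hsum)
    simp only [ContinuousLinearMap.zero_apply, ContinuousLinearMap.sum_apply,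
      ContinuousLinearMap.add_apply, ContinuousLinearMap.smul_apply, smul_eq_mul] at hu
    have hentry : (DB * g p) i j + ((g p)⁻¹ * X) i j = 0 := by
      simp only [Matrix.mul_apply, hDBdef, hXdef, Matrix.of_apply]
      rw [← Finset.sum_add_distrib]
      rw [show (0:ℝ) = ∑ x : Fin n, ((g p)⁻¹ i x * (fderiv ℝ (fun z => g z x j) p) u
        + g p x j * (fderiv ℝ (fun z => (g z)⁻¹ i x) p) u) from hu]
      exact Finset.sum_congr rfl fun l _ => by ring
    rw [Matrix.neg_apply]
    linarith [hentry]
  calc DB = DB * (g p * (g p)⁻¹) := by rw [Matrix.mul_nonsing_inv _ (hunit p hp), mul_one]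
    _ = (DB * g p) * (g p)⁻¹ := by rw [Matrix.mul_assoc]
    _ = -((g p)⁻¹ * X) * (g p)⁻¹ := by rw [key]
    _ = -((g p)⁻¹ * X * (g p)⁻¹) := by rw [Matrix.neg_mul]

lemma final_algebra {n : ℕ} (A G : Matrix (Fin n) (Fin n) ℝ) (hAs : Aᵀ = A)
    (D : Fin n → Matrix (Fin n) (Fin n) ℝ) (vt F : Fin n → ℝ) (k : Fin n) :
    (∑ j, ((-(A * G * A)) k j * vt j
        + A k j * (-(F j + (1/2) * ((A * D j).trace)
            - (1/2) * (vt ⬝ᵥ (A * D j * A).mulVec vt)))))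
      = ((-(A.mulVec (G.mulVec (A.mulVec vt)))
          + (1/2 : ℝ) • (A.mulVec (fun l => (A.mulVec vt) ⬝ᵥ (D l).mulVec (A.mulVec vt)))
          - A.mulVec F
          - (1/2 : ℝ) • (A.mulVec (fun l => (A * D l).trace))) k) := by
  have h2 : ∀ j, vt ⬝ᵥ ((A * D j * A).mulVec vt)
      = (A.mulVec vt) ⬝ᵥ ((D j).mulVec (A.mulVec vt)) := by
    intro j
    rw [← Matrix.mulVec_mulVec, ← Matrix.mulVec_mulVec, Matrix.dotProduct_mulVec]
    congr 1
    conv_lhs => rw [← hAs]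
    rw [Matrix.vecMul_transpose]
  have h1 : (∑ j, (-(A * G * A)) k j * vt j)
      = (-(A.mulVec (G.mulVec (A.mulVec vt)))) k := by
    have hr : (∑ j, (-(A * G * A)) k j * vt j) = ((-(A * G * A)).mulVec vt) k := rfl
    rw [hr, Matrix.neg_mulVec, ← Matrix.mulVec_mulVec, ← Matrix.mulVec_mulVec]
  rw [Finset.sum_add_distrib, h1]
  have h3 : (∑ j, A k j * (-(F j + (1/2) * ((A * D j).trace)
        - (1/2) * (vt ⬝ᵥ (A * D j * A).mulVec vt))))
      = (1/2) * (∑ j, A k j * ((A.mulVec vt) ⬝ᵥ (D j).mulVec (A.mulVec vt)))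
        - (∑ j, A k j * F j) - (1/2) * (∑ j, A k j * ((A * D j).trace)) := by
    rw [Finset.mul_sum, Finset.mul_sum, ← Finset.sum_sub_distrib, ← Finset.sum_sub_distrib]
    refine Finset.sum_congr rfl fun j _ => ?_
    rw [h2 j]
    ring
  rw [h3]
  simp only [Pi.add_apply, Pi.sub_apply, Pi.neg_apply, Pi.smul_apply, smul_eq_mul]
  have e1 : (A.mulVec (fun l => (A.mulVec vt) ⬝ᵥ (D l).mulVec (A.mulVec vt))) k
      = ∑ j, A k j * ((A.mulVec vt) ⬝ᵥ (D j).mulVec (A.mulVec vt)) := rfl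
  have e2 : (A.mulVec F) k = ∑ j, A k j * F j := rfl
  have e3 : (A.mulVec (fun l => (A * D l).trace)) k = ∑ j, A k j * ((A * D j).trace) := rfl
  rw [e1, e2, e3]
  ring

/-- The Hamiltonian curve for
`H(x,v) = f(x) + (1/2) log((2π)^n det g(x)) + (1/2) vᵀ g(x)⁻¹ v`
satisfies `x' = g(x)⁻¹ v` and the stated second-order ODE. -/
theorem rhmc_hamiltonian_ode
    (n : ℕ) (M : Set (Fin n → ℝ)) (hM : IsOpen M)
    (g : (Fin n → ℝ) → Matrix (Fin n) (Fin n) ℝ)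
    (f : (Fin n → ℝ) → ℝ)
    (hg : ∀ i j, ContDiffOn ℝ (⊤ : ℕ∞) (fun x => g x i j) M)
    (hf : ContDiffOn ℝ (⊤ : ℕ∞) f M)
    (hsym : ∀ x ∈ M, (g x).IsSymm)
    (hpd : ∀ x ∈ M, (g x).PosDef)
    (H : (Fin n → ℝ) × (Fin n → ℝ) → ℝ)
    (hH : ∀ p, H p = f p.1 + (1/2) * Real.log ((2 * π) ^ n * (g p.1).det)
        + (1/2) * (p.2 ⬝ᵥ (g p.1)⁻¹.mulVec p.2))
    (I : Set ℝ) (hI : IsOpen I)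
    (x v : ℝ → Fin n → ℝ)
    (hxM : ∀ t ∈ I, x t ∈ M)
    (hham1 : ∀ t ∈ I, ∀ k, HasDerivAt (fun s => x s k)
      (fderiv ℝ (fun w => H (x t, w)) (v t) (Pi.single k 1)) t)
    (hham2 : ∀ t ∈ I, ∀ k, HasDerivAt (fun s => v s k)
      (-(fderiv ℝ (fun u => H (u, v t)) (x t) (Pi.single k 1))) t) :
    ∀ t ∈ I,
      (fun k => deriv (fun s => x s k) t) = (g (x t))⁻¹.mulVec (v t) ∧
      (fun k => deriv (fun s => deriv (fun u => x u k) s) t) =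
        (-((g (x t))⁻¹.mulVec
            ((Matrix.of fun i j => ∑ l, deriv (fun s => x s l) t *
                fderiv ℝ (fun z => g z i j) (x t) (Pi.single l 1)).mulVec
              (fun l => deriv (fun s => x s l) t)))
          + (1/2 : ℝ) • ((g (x t))⁻¹.mulVec (fun k =>
              (fun a => deriv (fun s => x s a) t) ⬝ᵥ
                (Matrix.of fun i j => fderiv ℝ (fun z => g z i j) (x t) (Pi.single k 1)).mulVec
                  (fun a => deriv (fun s => x s a) t)))
          - (g (x t))⁻¹.mulVec (fun k => fderiv ℝ f (x t) (Pi.single k 1))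
          - (1/2 : ℝ) • ((g (x t))⁻¹.mulVec (fun k =>
              ((g (x t))⁻¹ *
                Matrix.of fun i j => fderiv ℝ (fun z => g z i j) (x t) (Pi.single k 1)).trace))) := by
  have hgd : ∀ q ∈ M, ∀ i j, DifferentiableAt ℝ (fun z => g z i j) q := fun q hq i j =>
    ((hg i j).differentiableOn (by simp)).differentiableAt (hM.mem_nhds hq)
  have hunit : ∀ q ∈ M, IsUnit (g q).det := fun q hq =>
    isUnit_iff_ne_zero.mpr (hpd q hq).det_pos.ne'
  have hAsymm : ∀ q ∈ M, ((g q)⁻¹)ᵀ = (g q)⁻¹ := by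
    intro q hq
    rw [Matrix.transpose_nonsing_inv, (hsym q hq).eq]
  have hv1 : ∀ s ∈ I, ∀ k, fderiv ℝ (fun w => H (x s, w)) (v s) (Pi.single k 1)
      = ((g (x s))⁻¹.mulVec (v s)) k := by
    intro s hs k
    have hfun : (fun w => H (x s, w)) = fun w =>
        (f (x s) + (1/2) * Real.log ((2 * π) ^ n * (g (x s)).det))
          + (1/2) * (w ⬝ᵥ (g (x s))⁻¹.mulVec w) := by
      funext w
      rw [hH (x s, w)]
    rw [hfun]
    exact quad_fderiv_apply _ (hAsymm _ (hxM s hs)) _ _ k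
  have hx1 : ∀ s ∈ I, ∀ k, HasDerivAt (fun u => x u k) (((g (x s))⁻¹.mulVec (v s)) k) s := by
    intro s hs k
    have h := hham1 s hs k
    rwa [hv1 s hs k] at h
  intro t ht
  have hp : x t ∈ M := hxM t ht
  have hgdp : ∀ i j, DifferentiableAt ℝ (fun z => g z i j) (x t) := hgd _ hp
  have hdetu : IsUnit (g (x t)).det := hunit _ hp
  have hdetpos : 0 < (g (x t)).det := (hpd _ hp).det_pos
  have hinvd : ∀ i j, DifferentiableAt ℝ (fun z => (g z)⁻¹ i j) (x t) :=
    inv_entry_diffAt hgdp hdetpos.ne'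
  have hXp : HasDerivAt (fun s => x s) ((g (x t))⁻¹.mulVec (v t)) t :=
    hasDerivAt_pi.mpr fun k => hx1 t ht k
  have hDB : ∀ u : Fin n → ℝ,
      (Matrix.of fun i j => fderiv ℝ (fun z => (g z)⁻¹ i j) (x t) u)
      = -((g (x t))⁻¹ * (Matrix.of fun i j => fderiv ℝ (fun z => g z i j) (x t) u)
          * (g (x t))⁻¹) := fun u => inv_fderiv_eq hM hp hgdp hunit u
  -- spatial derivative of H
  have hne : (2 * π) ^ n * (g (x t)).det ≠ 0 := by
    have h2 : (0:ℝ) < 2 * π := by positivity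
    positivity
  have hHx : ∀ k, fderiv ℝ (fun u => H (u, v t)) (x t) (Pi.single k 1)
      = fderiv ℝ f (x t) (Pi.single k 1)
        + (1/2) * (((g (x t))⁻¹ *
            (Matrix.of fun i j => fderiv ℝ (fun z => g z i j) (x t) (Pi.single k 1))).trace)
        - (1/2) * (v t ⬝ᵥ ((g (x t))⁻¹ *
            (Matrix.of fun i j => fderiv ℝ (fun z => g z i j) (x t) (Pi.single k 1))
            * (g (x t))⁻¹).mulVec (v t)) := by
    intro k
    have hfun : (fun u => H (u, v t)) = fun u =>
        f u + (1/2) * Real.log ((2 * π) ^ n * (g u).det)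
          + (1/2) * (v t ⬝ᵥ (g u)⁻¹.mulVec (v t)) := funext fun u => hH (u, v t)
    have hF1 : HasFDerivAt f (fderiv ℝ f (x t)) (x t) :=
      (((hf.differentiableOn (by simp)).differentiableAt (hM.mem_nhds hp))).hasFDerivAt
    have hFdet := det_hasFDerivAt hgdp
    have hF2 := ((hFdet.const_mul ((2 * π) ^ n)).log hne).const_mul (1/2 : ℝ)
    have hfun3 : (fun u => (1/2 : ℝ) * (v t ⬝ᵥ (g u)⁻¹.mulVec (v t)))
        = fun u => ∑ i, ∑ j, ((1/2) * (v t i * v t j)) * (g u)⁻¹ i j := by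
      funext u
      simp only [dotProduct, mulVec, Finset.mul_sum]
      exact Finset.sum_congr rfl fun i _ => Finset.sum_congr rfl fun j _ => by ring
    have hF3 : HasFDerivAt (fun u => (1/2 : ℝ) * (v t ⬝ᵥ (g u)⁻¹.mulVec (v t)))
        (∑ i, ∑ j, ((1/2) * (v t i * v t j)) • fderiv ℝ (fun z => (g z)⁻¹ i j) (x t))
        (x t) := by
      rw [hfun3]
      exact HasFDerivAt.fun_sum fun i _ => HasFDerivAt.fun_sum fun j _ =>
        ((hinvd i j).hasFDerivAt).const_mul _
    have htot := (hF1.fun_add hF2).fun_add hF3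
    rw [← hfun] at htot
    rw [htot.fderiv]
    rw [ContinuousLinearMap.add_apply, ContinuousLinearMap.add_apply,
      ContinuousLinearMap.smul_apply, ContinuousLinearMap.smul_apply,
      ContinuousLinearMap.smul_apply, det_fderiv_apply hdetu (Pi.single k 1)]
    have h3 : (∑ i, ∑ j, ((1/2 : ℝ) * (v t i * v t j)) •
        fderiv ℝ (fun z => (g z)⁻¹ i j) (x t)) (Pi.single k 1)
        = (1/2) * (v t ⬝ᵥ ((Matrix.of fun i j =>
            fderiv ℝ (fun z => (g z)⁻¹ i j) (x t) (Pi.single k 1)).mulVec (v t))) := by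
      simp only [ContinuousLinearMap.sum_apply, ContinuousLinearMap.smul_apply, smul_eq_mul,
        dotProduct, mulVec, Finset.mul_sum, Matrix.of_apply]
      exact Finset.sum_congr rfl fun i _ => Finset.sum_congr rfl fun j _ => by ring
    rw [h3, hDB (Pi.single k 1), Matrix.neg_mulVec, dotProduct_neg]
    rw [smul_eq_mul, smul_eq_mul, smul_eq_mul]
    have hpi : ((2:ℝ) * π) ^ n ≠ 0 := by
      have : (0:ℝ) < 2 * π := by positivity
      positivity
    field_simp
    ring
  -- time derivative of v
  have hv2 : ∀ k, HasDerivAt (fun s => v s k)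
      (-(fderiv ℝ f (x t) (Pi.single k 1)
        + (1/2) * (((g (x t))⁻¹ * (Matrix.of fun i j =>
            fderiv ℝ (fun z => g z i j) (x t) (Pi.single k 1))).trace)
        - (1/2) * (v t ⬝ᵥ ((g (x t))⁻¹ * (Matrix.of fun i j =>
            fderiv ℝ (fun z => g z i j) (x t) (Pi.single k 1)) * (g (x t))⁻¹).mulVec (v t)))) t := by
    intro k
    have h := hham2 t ht k
    rwa [hHx k] at h
  -- time derivative of the inverse-metric entries
  have hA' : ∀ i j, HasDerivAt (fun s => (g (x s))⁻¹ i j)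
      ((-((g (x t))⁻¹ * (Matrix.of fun a b =>
          fderiv ℝ (fun z => g z a b) (x t) ((g (x t))⁻¹.mulVec (v t))) * (g (x t))⁻¹)) i j) t := by
    intro i j
    have hc := ((hinvd i j).hasFDerivAt).comp_hasDerivAt t hXp
    have hval : fderiv ℝ (fun z => (g z)⁻¹ i j) (x t) ((g (x t))⁻¹.mulVec (v t))
        = (-((g (x t))⁻¹ * (Matrix.of fun a b =>
            fderiv ℝ (fun z => g z a b) (x t) ((g (x t))⁻¹.mulVec (v t))) * (g (x t))⁻¹)) i j := by
      rw [show fderiv ℝ (fun z => (g z)⁻¹ i j) (x t) ((g (x t))⁻¹.mulVec (v t))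
        = (Matrix.of fun a b => fderiv ℝ (fun z => (g z)⁻¹ a b) (x t)
            ((g (x t))⁻¹.mulVec (v t))) i j from rfl]
      rw [hDB ((g (x t))⁻¹.mulVec (v t))]
    rw [hval] at hc
    exact hc
  -- time derivative of (g (x s))⁻¹ *ᵥ v s, coordinatewise
  have hφ : ∀ k, HasDerivAt (fun s => ((g (x s))⁻¹.mulVec (v s)) k)
      (∑ j, ((-((g (x t))⁻¹ * (Matrix.of fun a b =>
            fderiv ℝ (fun z => g z a b) (x t) ((g (x t))⁻¹.mulVec (v t))) * (g (x t))⁻¹)) k j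
              * v t j
        + (g (x t))⁻¹ k j *
          (-(fderiv ℝ f (x t) (Pi.single j 1)
            + (1/2) * (((g (x t))⁻¹ * (Matrix.of fun a b =>
                fderiv ℝ (fun z => g z a b) (x t) (Pi.single j 1))).trace)
            - (1/2) * (v t ⬝ᵥ ((g (x t))⁻¹ * (Matrix.of fun a b =>
                fderiv ℝ (fun z => g z a b) (x t) (Pi.single j 1)) * (g (x t))⁻¹).mulVec
                  (v t)))))) t := by
    intro k
    have hfun : (fun s => ((g (x s))⁻¹.mulVec (v s)) k)
        = fun s => ∑ j, (g (x s))⁻¹ k j * v s j := by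
      funext s
      simp [Matrix.mulVec, dotProduct]
    rw [hfun]
    exact HasDerivAt.fun_sum fun j _ => (hA' k j).fun_mul (hv2 j)
  -- the second derivative of x
  have hsec : ∀ k, deriv (fun s => deriv (fun u => x u k) s) t
      = ∑ j, ((-((g (x t))⁻¹ * (Matrix.of fun a b =>
            fderiv ℝ (fun z => g z a b) (x t) ((g (x t))⁻¹.mulVec (v t))) * (g (x t))⁻¹)) k j
              * v t j
        + (g (x t))⁻¹ k j *
          (-(fderiv ℝ f (x t) (Pi.single j 1)
            + (1/2) * (((g (x t))⁻¹ * (Matrix.of fun a b =>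
                fderiv ℝ (fun z => g z a b) (x t) (Pi.single j 1))).trace)
            - (1/2) * (v t ⬝ᵥ ((g (x t))⁻¹ * (Matrix.of fun a b =>
                fderiv ℝ (fun z => g z a b) (x t) (Pi.single j 1)) * (g (x t))⁻¹).mulVec
                  (v t))))) := by
    intro k
    have hev : (fun s => deriv (fun u => x u k) s)
        =ᶠ[nhds t] (fun s => ((g (x s))⁻¹.mulVec (v s)) k) := by
      filter_upwards [hI.mem_nhds ht] with s hs
      exact (hx1 s hs k).deriv
    rw [hev.deriv_eq, (hφ k).deriv]
  have hder : ∀ l, deriv (fun s => x s l) t = ((g (x t))⁻¹.mulVec (v t)) l :=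
    fun l => (hx1 t ht l).deriv
  refine ⟨funext fun k => hder k, ?_⟩
  funext k
  rw [hsec k]
  simp only [hder]
  have hG : (Matrix.of fun i j => ∑ l, ((g (x t))⁻¹.mulVec (v t)) l *
      fderiv ℝ (fun z => g z i j) (x t) (Pi.single l 1))
      = Matrix.of fun a b => fderiv ℝ (fun z => g z a b) (x t) ((g (x t))⁻¹.mulVec (v t)) := by
    ext i j
    exact (clm_apply_eq_sum _ _).symm
  rw [hG]
  exact final_algebra (g (x t))⁻¹ _ (hAsymm _ hp)
    (fun l => Matrix.of fun a b => fderiv ℝ (fun z => g z a b) (x t) (Pi.single l 1))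
    (v t) (fun j => fderiv ℝ f (x t) (Pi.single j 1)) k
end

section
/- Let Φ : [0, ℓ] → ℝ^{n×n} be continuous and let Ψ : [0, ℓ] → ℝ^{n×n} be twice continuously differentiable with Ψ''(t) = Φ(t)Ψ(t) for all t ∈ [0, ℓ], Ψ(0) = A and Ψ'(0) = B. Let λ = max_{0 ≤ t ≤ ℓ} ‖Φ(t)‖₂ and assume λ > 0. Then for all t ∈ [0, ℓ], ‖Ψ(t)‖₂ ≤ ‖A‖₂ cosh(√λ t) + (‖B‖₂/√λ) sinh(√λ t). -/
/-!
With `r = √λ`, submultiplicativity of the spectral norm gives `‖Ψ''‖ ≤ r² ‖Ψ‖`, so in the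
`ℓ¹`-product norm the pair `(r Ψ, Ψ')` satisfies `‖(r Ψ, Ψ')'‖ ≤ r ‖(r Ψ, Ψ')‖`, and Grönwall
yields `r ‖Ψ‖ + ‖Ψ'‖ ≤ (r ‖A‖ + ‖B‖) e^{rt}`. Hence `‖Ψ‖` obeys the first-order differential
inequality `‖Ψ‖' ≤ (r ‖A‖ + ‖B‖) e^{rt} - r ‖Ψ‖`, whose equality case, with initial value `‖A‖`,
is solved by `‖A‖ cosh (rt) + (‖B‖ / r) sinh (rt)`; a fencing argument bounds `‖Ψ‖` by it.
-/

open Set Matrix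

/-- The spectral (ℓ² operator) norm of a real square matrix. -/
noncomputable def specNorm {n : ℕ} (A : Matrix (Fin n) (Fin n) ℝ) : ℝ :=
  ‖LinearMap.toContinuousLinearMap (Matrix.toEuclideanLin A)‖

open Real

section SecondOrder

variable {E : Type*} [NormedAddCommGroup E] [NormedSpace ℝ E] {ℓ r : ℝ} {f g h : ℝ → E}

lemma mul_norm_add_norm_le_exp_of_second_order (hr : 0 ≤ r)
    (hf : ∀ t ∈ Icc 0 ℓ, HasDerivAt f (g t) t) (hg : ∀ t ∈ Icc 0 ℓ, HasDerivAt g (h t) t)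
    (hh : ∀ t ∈ Icc 0 ℓ, ‖h t‖ ≤ r ^ 2 * ‖f t‖) :
    ∀ t ∈ Icc 0 ℓ, r * ‖f t‖ + ‖g t‖ ≤ (r * ‖f 0‖ + ‖g 0‖) * exp (r * t) := by
  let F : ℝ → WithLp 1 (E × E) := fun t => WithLp.toLp 1 (r • f t, g t)
  have hnorm : ∀ a b : E, ‖WithLp.toLp 1 (r • a, b)‖ = r * ‖a‖ + ‖b‖ := fun a b => by
    simp [WithLp.prod_norm_eq_of_L1, norm_smul, abs_of_nonneg hr]
  have hF : ∀ t ∈ Icc 0 ℓ, HasDerivAt F (WithLp.toLp 1 (r • g t, h t)) t := fun t ht =>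
    (WithLp.prodContinuousLinearEquiv 1 ℝ E E).symm.hasFDerivAt.comp_hasDerivAt t
      (((hf t ht).const_smul r).prodMk (hg t ht))
  have hF' : ∀ x ∈ Ico 0 ℓ, ‖WithLp.toLp 1 (r • g x, h x)‖ ≤ r * ‖F x‖ + 0 := fun x hx => by
    have := hh x (Ico_subset_Icc_self hx)
    rw [← one_smul ℝ (h x), hnorm, hnorm, add_zero, one_smul]
    nlinarith
  intro t ht
  have hgronwall := norm_le_gronwallBound_of_norm_deriv_right_le
    (fun x hx => (hF x hx).continuousAt.continuousWithinAt)
    (fun x hx => (hF x (Ico_subset_Icc_self hx)).hasDerivWithinAt) le_rfl hF' t ht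
  simpa [F, hnorm, gronwallBound_ε0] using hgronwall

lemma norm_le_cosh_sinh_of_mul_norm_add_norm_deriv_le_exp (hr : 0 < r) {d : ℝ}
    (hf : ∀ t ∈ Icc 0 ℓ, HasDerivAt f (g t) t)
    (hg : ∀ t ∈ Icc 0 ℓ, r * ‖f t‖ + ‖g t‖ ≤ (r * ‖f 0‖ + d) * exp (r * t)) :
    ∀ t ∈ Icc 0 ℓ, ‖f t‖ ≤ ‖f 0‖ * cosh (r * t) + d / r * sinh (r * t) := by
  set C : ℝ → ℝ := fun t => ‖f 0‖ * cosh (r * t) + d / r * sinh (r * t)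
  set C' : ℝ → ℝ := fun t => r * ‖f 0‖ * sinh (r * t) + d * cosh (r * t)
  have hC : ∀ t, HasDerivAt C (C' t) t := fun t => by
    have hlin : HasDerivAt (fun s => r * s) r t := by simpa using (hasDerivAt_id t).const_mul r
    refine ((hlin.cosh.const_mul ‖f 0‖).add (hlin.sinh.const_mul (d / r))).congr_deriv ?_
    simp only [C']
    field_simp
  have hC_add : ∀ t, r * C t + C' t = (r * ‖f 0‖ + d) * exp (r * t) := fun t => by
    simp only [C, C', ← cosh_add_sinh]
    field_simp
    ring
  intro t ht
  -- Raising the boundary `C` by `ε` makes the derivative comparison at a contact point strict.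
  refine le_of_forall_pos_le_add fun ε hε => ?_
  refine image_norm_le_of_norm_deriv_right_lt_deriv_boundary (B := fun s => C s + ε)
    (fun x hx => (hf x hx).continuousAt.continuousWithinAt)
    (fun x hx => (hf x (Ico_subset_Icc_self hx)).hasDerivWithinAt)
    (by simp [C, hε.le]) (fun x => (hC x).add_const ε) (fun x hx hcontact => ?_) ht
  nlinarith [hg x (Ico_subset_Icc_self hx), hC_add x]

theorem norm_le_cosh_sinh_of_second_order (hr : 0 < r)
    (hf : ∀ t ∈ Icc 0 ℓ, HasDerivAt f (g t) t) (hg : ∀ t ∈ Icc 0 ℓ, HasDerivAt g (h t) t)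
    (hh : ∀ t ∈ Icc 0 ℓ, ‖h t‖ ≤ r ^ 2 * ‖f t‖) :
    ∀ t ∈ Icc 0 ℓ, ‖f t‖ ≤ ‖f 0‖ * cosh (r * t) + ‖g 0‖ / r * sinh (r * t) :=
  norm_le_cosh_sinh_of_mul_norm_add_norm_deriv_le_exp hr hf
    (mul_norm_add_norm_le_exp_of_second_order hr.le hf hg hh)

end SecondOrder

open scoped Matrix.Norms.L2Operator

lemma specNorm_eq_norm {n : ℕ} (A : Matrix (Fin n) (Fin n) ℝ) : specNorm A = ‖A‖ := rfl

lemma Matrix.hasDerivAt_of_entries {𝕜 m n : Type*} [RCLike 𝕜] [Fintype m] [Fintype n]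
    [DecidableEq n] {P : 𝕜 → Matrix m n 𝕜} {Q : Matrix m n 𝕜} {x : 𝕜}
    (h : ∀ i j, HasDerivAt (fun s => P s i j) (Q i j) x) : HasDerivAt P Q x :=
  hasDerivAt_pi.2 fun i => hasDerivAt_pi.2 fun j => h i j

theorem matrix_ode_cosh_bound_general
    (n : ℕ) (ℓ : ℝ)
    (Φ Ψ Ψ' : ℝ → Matrix (Fin n) (Fin n) ℝ)
    (A B : Matrix (Fin n) (Fin n) ℝ)
    (hΨ : ∀ t ∈ Icc 0 ℓ, ∀ i j, HasDerivAt (fun s => Ψ s i j) (Ψ' t i j) t)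
    (hΨ' : ∀ t ∈ Icc 0 ℓ, ∀ i j, HasDerivAt (fun s => Ψ' s i j) ((Φ t * Ψ t) i j) t)
    (hA : Ψ 0 = A) (hB : Ψ' 0 = B)
    (lam : ℝ)
    (hlam : IsGreatest ((fun t => specNorm (Φ t)) '' Icc 0 ℓ) lam)
    (hlampos : 0 < lam) :
    ∀ t ∈ Icc 0 ℓ,
      specNorm (Ψ t) ≤ specNorm A * Real.cosh (Real.sqrt lam * t)
        + (specNorm B / Real.sqrt lam) * Real.sinh (Real.sqrt lam * t) := by
  subst hA hB
  have hΦΨ (s : ℝ) (hs : s ∈ Icc 0 ℓ) : ‖Φ s * Ψ s‖ ≤ √lam ^ 2 * ‖Ψ s‖ := calc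
    ‖Φ s * Ψ s‖ ≤ ‖Φ s‖ * ‖Ψ s‖ := norm_mul_le _ _
    _ ≤ lam * ‖Ψ s‖ := by gcongr; exact hlam.2 ⟨s, hs, rfl⟩
    _ = √lam ^ 2 * ‖Ψ s‖ := by rw [sq_sqrt hlampos.le]
  simp only [specNorm_eq_norm]
  exact norm_le_cosh_sinh_of_second_order (sqrt_pos.2 hlampos)
    (fun s hs => Matrix.hasDerivAt_of_entries (hΨ s hs))
    (fun s hs => Matrix.hasDerivAt_of_entries (hΨ' s hs)) hΦΨ

/-- cosh/sinh bound for the solution of the matrix ODE `Ψ'' = Φ Ψ`. -/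
theorem matrix_ode_cosh_bound
    (n : ℕ) (ℓ : ℝ) (hℓ : 0 ≤ ℓ)
    (Φ Ψ Ψ' : ℝ → Matrix (Fin n) (Fin n) ℝ)
    (A B : Matrix (Fin n) (Fin n) ℝ)
    (hΦcont : ∀ i j, ContinuousOn (fun t => Φ t i j) (Icc 0 ℓ))
    (hΨ : ∀ t ∈ Icc 0 ℓ, ∀ i j, HasDerivAt (fun s => Ψ s i j) (Ψ' t i j) t)
    (hΨ' : ∀ t ∈ Icc 0 ℓ, ∀ i j, HasDerivAt (fun s => Ψ' s i j) ((Φ t * Ψ t) i j) t)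
    (hA : Ψ 0 = A) (hB : Ψ' 0 = B)
    (lam : ℝ)
    (hlam : IsGreatest ((fun t => specNorm (Φ t)) '' Icc 0 ℓ) lam)
    (hlampos : 0 < lam) :
    ∀ t ∈ Icc 0 ℓ,
      specNorm (Ψ t) ≤ specNorm A * Real.cosh (Real.sqrt lam * t)
        + (specNorm B / Real.sqrt lam) * Real.sinh (Real.sqrt lam * t) :=
  matrix_ode_cosh_bound_general n ℓ Φ Ψ Ψ' A B hΨ hΨ' hA hB lam hlam hlampos
end

section
/- Let δ > 0, let Φ : [0, δ] → ℝ^{n×n} be continuous with ‖Φ(t)‖_F ≤ R₁ for all t ∈ [0, δ], where δ² R₁ ≤ 1, and let Ψ : [0, δ] → ℝ^{n×n} be twice continuously differentiable with Ψ''(t) = Φ(t)Ψ(t), Ψ(0) = 0 and Ψ'(0) = I. Then: (1) ‖(1/δ)Ψ(δ) − I‖_F ≤ 1/5, so in particular Ψ(δ) is invertible; and (2) |log det((1/δ)Ψ(δ)) − ∫₀^δ (t(δ − t)/δ) tr Φ(t) dt| ≤ (δ² R₁)²/10. -/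
/-!
Subtracting the free solution gives the Volterra equation
`Ψ t - t • 1 = ∫₀ᵗ (t - s) • Φ s Ψ s ds`. Since `R₁ t² ≤ 1` on `[0, δ]`, it forces the defect
`‖Ψ t - t • 1‖` below `R₁ t³ / 5` (Frobenius norm throughout). At `t = δ`, writing
`Φ Ψ = s • Φ + Φ (Ψ - s • 1)` splits `Ψ δ / δ - 1` into `A = ∫₀^δ (s (δ - s) / δ) • Φ s ds`, of
norm at most `δ² R₁ / 6`, and a remainder whose norm and trace are at most `(δ² R₁)² / 100`,
by `|tr (X Y)| ≤ ‖X‖ ‖Y‖`. Finally `|log det (1 + B) - tr B| ≤ ‖B‖² / (2 (1 - ‖B‖))`, obtained by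
integrating `d/du log det (1 + u B) = tr ((1 + u B)⁻¹ B)` over `[0, 1]`.
-/

open Set Matrix

/-- The Frobenius norm of a real square matrix. -/
noncomputable def frobNorm {n : ℕ} (A : Matrix (Fin n) (Fin n) ℝ) : ℝ :=
  Real.sqrt (∑ i, ∑ j, (A i j) ^ 2)

open MeasureTheory
open scoped Matrix.Norms.Frobenius

theorem frobNorm_eq_norm {n : ℕ} (A : Matrix (Fin n) (Fin n) ℝ) : frobNorm A = ‖A‖ := by
  simp [frobNorm, frobenius_norm_def, Real.sqrt_eq_rpow]

theorem isUnit_one_add_of_norm_lt_one {R : Type*} [NormedRing R] [HasSummableGeomSeries R]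
    {x : R} (hx : ‖x‖ < 1) : IsUnit (1 + x) := by
  have := (Units.oneSub (-x) (by rwa [norm_neg])).isUnit
  rwa [Units.val_oneSub, sub_neg_eq_add] at this

theorem ContinuousOn.matrix_mul {X R m n p : Type*} [TopologicalSpace X] [TopologicalSpace R]
    [Fintype n] [Mul R] [AddCommMonoid R] [ContinuousAdd R] [ContinuousMul R]
    {A : X → Matrix m n R} {B : X → Matrix n p R} {s : Set X}
    (hA : ContinuousOn A s) (hB : ContinuousOn B s) : ContinuousOn (fun x => A x * B x) s :=
  (continuous_fst.matrix_mul continuous_snd).comp_continuousOn (hA.prodMk hB)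

namespace Matrix

variable {m n : Type*} [Fintype m] [Fintype n]

theorem frobenius_norm_sq_eq_sum (A : Matrix m n ℝ) : ‖A‖ ^ 2 = ∑ i, ∑ j, A i j ^ 2 := by
  rw [frobenius_norm_def, ← Real.rpow_natCast, ← Real.rpow_mul (by positivity)]
  simp

theorem frobenius_norm_sq_eq_trace (A : Matrix m n ℝ) : ‖A‖ ^ 2 = (Aᵀ * A).trace := by
  rw [frobenius_norm_sq_eq_sum, Finset.sum_comm]
  simp [trace, mul_apply, sq]

theorem frobenius_abs_trace_mul_le (A : Matrix m n ℝ) (B : Matrix n m ℝ) :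
    |(A * B).trace| ≤ ‖A‖ * ‖B‖ := by
  refine abs_le_of_sq_le_sq ?_ (by positivity)
  have hcs := Finset.sum_mul_sq_le_sq_mul_sq Finset.univ (fun p : m × n => A p.1 p.2)
    (fun p => B p.2 p.1)
  simp only [Fintype.sum_prod_type] at hcs
  rw [mul_pow, frobenius_norm_sq_eq_sum, frobenius_norm_sq_eq_sum B,
    Finset.sum_comm (f := fun i j => B i j ^ 2)]
  simpa [trace, mul_apply] using hcs

end Matrix

section EntrywiseIntegral

theorem intervalIntegrable_apply_of_continuousOn {m n : Type*} {F : ℝ → Matrix m n ℝ} {a b : ℝ}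
    (hab : a ≤ b) (hF : ContinuousOn F (Icc a b)) (i : m) (j : n) :
    IntervalIntegrable (fun s => F s i j) volume a b :=
  (continuousOn_pi.1 (continuousOn_pi.1 hF i) j).intervalIntegrable_of_Icc hab

variable {m n : Type*} [Fintype m] [Fintype n]

/-- Entrywise, because Bochner integration against the scoped Frobenius norm does not typecheck:
its topology agrees with the product topology on `Matrix` only by unfolding past instance
reducibility. -/
noncomputable def entrywiseIntegral (F : ℝ → Matrix m n ℝ) (a b : ℝ) : Matrix m n ℝ :=
  of fun i j => ∫ s in a..b, F s i j

theorem trace_mul_entrywiseIntegral (X : Matrix n m ℝ) {F : ℝ → Matrix m n ℝ} {a b : ℝ}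
    (hF : ∀ i j, IntervalIntegrable (fun s => F s i j) volume a b) :
    (X * entrywiseIntegral F a b).trace = ∫ s in a..b, (X * F s).trace := by
  simp only [trace, diag, mul_apply, entrywiseIntegral, of_apply]
  rw [intervalIntegral.integral_finsetSum fun i _ => ?_]
  · refine Finset.sum_congr rfl fun i _ => ?_
    rw [intervalIntegral.integral_finsetSum fun j _ => (hF j i).const_mul _]
    simp only [intervalIntegral.integral_const_mul]
  · simpa only [Finset.sum_fn] using
      IntervalIntegrable.sum Finset.univ fun j _ => (hF j i).const_mul (X i j)

theorem trace_entrywiseIntegral {F : ℝ → Matrix m m ℝ} {a b : ℝ}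
    (hF : ∀ i j, IntervalIntegrable (fun s => F s i j) volume a b) :
    (entrywiseIntegral F a b).trace = ∫ s in a..b, (F s).trace := by
  simp only [trace, diag, entrywiseIntegral, of_apply]
  rw [intervalIntegral.integral_finsetSum fun i _ => hF i i]

theorem norm_entrywiseIntegral_le {F : ℝ → Matrix m n ℝ} {g : ℝ → ℝ} {a b : ℝ} (hab : a ≤ b)
    (hF : ContinuousOn F (Icc a b)) (hg : ContinuousOn g (Icc a b))
    (hFg : ∀ s ∈ Icc a b, ‖F s‖ ≤ g s) :
    ‖entrywiseIntegral F a b‖ ≤ ∫ s in a..b, g s := by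
  set M := entrywiseIntegral F a b
  have hg0 : 0 ≤ ∫ s in a..b, g s :=
    intervalIntegral.integral_nonneg hab fun s hs => (norm_nonneg _).trans (hFg s hs)
  -- duality: `‖M‖² = tr (Mᵀ M)` is the integral of `tr (Mᵀ F s) ≤ ‖M‖ ‖F s‖`
  have hsq : ‖M‖ ^ 2 ≤ ‖M‖ * ∫ s in a..b, g s := calc
    ‖M‖ ^ 2 = ∫ s in a..b, (Mᵀ * F s).trace := by
      rw [frobenius_norm_sq_eq_trace,
        trace_mul_entrywiseIntegral _ (intervalIntegrable_apply_of_continuousOn hab hF)]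
    _ ≤ ∫ s in a..b, ‖M‖ * g s := by
      refine intervalIntegral.integral_mono_on hab
        ((continuous_const.matrix_mul continuous_id).matrix_trace.comp_continuousOn hF
          |>.intervalIntegrable_of_Icc hab)
        ((continuousOn_const.mul hg).intervalIntegrable_of_Icc hab) fun s hs => ?_
      calc (Mᵀ * F s).trace ≤ ‖Mᵀ‖ * ‖F s‖ := (le_abs_self _).trans (frobenius_abs_trace_mul_le _ _)
        _ ≤ ‖M‖ * g s := by rw [frobenius_norm_transpose]; gcongr; exact hFg s hs
    _ = ‖M‖ * ∫ s in a..b, g s := intervalIntegral.integral_const_mul _ _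
  nlinarith [norm_nonneg M]

theorem abs_trace_entrywiseIntegral_le {F : ℝ → Matrix m m ℝ} {g : ℝ → ℝ} {a b : ℝ}
    (hab : a ≤ b) (hF : ContinuousOn F (Icc a b)) (hg : ContinuousOn g (Icc a b))
    (hFg : ∀ s ∈ Icc a b, |(F s).trace| ≤ g s) :
    |(entrywiseIntegral F a b).trace| ≤ ∫ s in a..b, g s := by
  rw [trace_entrywiseIntegral (intervalIntegrable_apply_of_continuousOn hab hF)]
  exact intervalIntegral.norm_integral_le_of_norm_le hab
    (ae_of_all _ fun s hs => (Real.norm_eq_abs _).trans_le (hFg s (Ioc_subset_Icc_self hs)))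
    (hg.intervalIntegrable_of_Icc hab)

end EntrywiseIntegral

section LogDet

variable {m : Type*} [Fintype m] [DecidableEq m]

theorem hasDerivAt_det_one_add_smul_zero {𝕜 : Type*} [NontriviallyNormedField 𝕜]
    (C : Matrix m m 𝕜) : HasDerivAt (fun h : 𝕜 => (1 + h • C).det) C.trace 0 := by
  set q := (1 + (Polynomial.X : Polynomial 𝕜) • C.map Polynomial.C).det.divX.divX
  have hdet : (fun h : 𝕜 => (1 + h • C).det) = fun h => 1 + C.trace * h + q.eval h * h ^ 2 :=
    funext fun h => det_one_add_smul h C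
  have h := (((hasDerivAt_id (0 : 𝕜)).const_mul C.trace).const_add 1).add
    ((q.hasDerivAt 0).mul (hasDerivAt_pow 2 (0 : 𝕜)))
  rw [hdet]
  exact h.congr_deriv (by simp)

theorem hasDerivAt_det_one_add_smul {𝕜 : Type*} [NontriviallyNormedField 𝕜]
    (B : Matrix m m 𝕜) {u : 𝕜} (hu : IsUnit (1 + u • B)) :
    HasDerivAt (fun v : 𝕜 => (1 + v • B).det) ((1 + u • B).det * ((1 + u • B)⁻¹ * B).trace) u := by
  set M := 1 + u • B with hM
  set C := M⁻¹ * B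
  have hMC : M * C = B := by
    rw [← mul_assoc, mul_nonsing_inv M ((isUnit_iff_isUnit_det M).mp hu), one_mul]
  have hfactor : (fun v : 𝕜 => (1 + v • B).det) = fun v => M.det * (1 + (v - u) • C).det := by
    funext v
    rw [← det_mul, hM, mul_add, mul_one, Matrix.mul_smul, hMC, add_assoc, ← add_smul,
      add_sub_cancel]
  have hshift : HasDerivAt (fun v : 𝕜 => (1 + (v - u) • C).det) C.trace u :=
    HasDerivAt.comp_sub_const u u (by simpa using hasDerivAt_det_one_add_smul_zero C)
  rw [hfactor]
  exact hshift.const_mul M.det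

theorem isUnit_one_add_smul_of_norm_lt_one {B : Matrix m m ℝ} (hB : ‖B‖ < 1) {u : ℝ}
    (hu : u ∈ Icc (0 : ℝ) 1) : IsUnit (1 + u • B) :=
  isUnit_one_add_of_norm_lt_one <| by
    rw [norm_smul, Real.norm_of_nonneg hu.1]
    nlinarith [norm_nonneg B, hu.2]

theorem abs_trace_inv_one_add_smul_mul_sub_le {B : Matrix m m ℝ} (hB : ‖B‖ < 1) {u : ℝ}
    (hu : u ∈ Icc (0 : ℝ) 1) :
    |((1 + u • B)⁻¹ * B).trace - B.trace| ≤ ‖B‖ ^ 2 / (1 - ‖B‖) * u := by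
  set K := (1 + u • B)⁻¹ * B
  have hK : K = B - u • (B * K) := by
    have : (1 + u • B) * K = B := by
      rw [← mul_assoc, mul_nonsing_inv _ ((isUnit_iff_isUnit_det _).mp
        (isUnit_one_add_smul_of_norm_lt_one hB hu)), one_mul]
    rw [add_mul, one_mul, smul_mul] at this
    exact eq_sub_of_add_eq this
  have hKnorm : ‖K‖ ≤ ‖B‖ / (1 - ‖B‖) := by
    have : ‖K‖ ≤ ‖B‖ + ‖B‖ * ‖K‖ := calc
      ‖K‖ ≤ ‖B‖ + u * (‖B‖ * ‖K‖) := by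
        nth_rewrite 1 [hK]
        refine (norm_sub_le _ _).trans ?_
        rw [norm_smul, Real.norm_of_nonneg hu.1]
        linarith [mul_le_mul_of_nonneg_left (frobenius_norm_mul B K) hu.1]
      _ ≤ ‖B‖ + ‖B‖ * ‖K‖ := by
        linarith [mul_le_of_le_one_left (mul_nonneg (norm_nonneg B) (norm_nonneg K)) hu.2]
    rw [le_div_iff₀ (by linarith)]
    linarith
  have htr : K.trace - B.trace = -(u * (B * K).trace) := by
    nth_rewrite 1 [hK]
    rw [trace_sub, trace_smul, smul_eq_mul]
    ring
  rw [htr, abs_neg, abs_mul, abs_of_nonneg hu.1]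
  calc u * |(B * K).trace| ≤ u * (‖B‖ * ‖K‖) :=
        mul_le_mul_of_nonneg_left (frobenius_abs_trace_mul_le _ _) hu.1
    _ ≤ u * (‖B‖ * (‖B‖ / (1 - ‖B‖))) := by gcongr; exact hu.1
    _ = ‖B‖ ^ 2 / (1 - ‖B‖) * u := by ring

theorem abs_log_det_one_add_sub_trace_le {B : Matrix m m ℝ} (hB : ‖B‖ < 1) :
    |Real.log (1 + B).det - B.trace| ≤ ‖B‖ ^ 2 / (2 * (1 - ‖B‖)) := by
  set c := ‖B‖ ^ 2 / (1 - ‖B‖)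
  have hunit : ∀ u ∈ Icc (0 : ℝ) 1, IsUnit (1 + u • B) := fun u hu =>
    isUnit_one_add_smul_of_norm_lt_one hB hu
  have hderiv : ∀ u ∈ Icc (0 : ℝ) 1, HasDerivAt (fun v => Real.log (1 + v • B).det - v * B.trace)
      (((1 + u • B)⁻¹ * B).trace - B.trace) u := fun u hu => by
    have hdet := (isUnit_iff_isUnit_det _).mp (hunit u hu)
    have h := ((hasDerivAt_det_one_add_smul B (hunit u hu)).log hdet.ne_zero).sub
      ((hasDerivAt_id u).mul_const B.trace)
    rwa [mul_div_cancel_left₀ _ hdet.ne_zero, one_mul] at h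
  have hbound := image_norm_le_of_norm_deriv_right_le_deriv_boundary
    (f := fun v => Real.log (1 + v • B).det - v * B.trace) (B := fun u => c / 2 * u ^ 2)
    (B' := fun u => c * u)
    (fun u hu => (hderiv u hu).continuousAt.continuousWithinAt)
    (fun u hu => (hderiv u (Ico_subset_Icc_self hu)).hasDerivWithinAt)
    (by simp)
    (fun u => by simpa using ((hasDerivAt_pow 2 u).const_mul (c / 2)).congr_deriv (by ring))
    (fun u hu => abs_trace_inv_one_add_smul_mul_sub_le hB (Ico_subset_Icc_self hu))
    (right_mem_Icc.2 zero_le_one)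
  simp only [one_smul, one_mul, Real.norm_eq_abs, one_pow, mul_one] at hbound
  rw [div_div] at hbound
  simpa [c, mul_comm] using hbound

end LogDet

section Volterra

theorem intervalIntegrable_sub_mul_pow (t : ℝ) (k : ℕ) :
    IntervalIntegrable (fun s : ℝ => (t - s) * s ^ k) volume 0 t :=
  (by fun_prop : Continuous fun s : ℝ => (t - s) * s ^ k).intervalIntegrable _ _

theorem integral_sub_mul_pow (t : ℝ) (k : ℕ) :
    ∫ s in (0 : ℝ)..t, (t - s) * s ^ k = t ^ (k + 2) / ((k + 1) * (k + 2)) := by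
  have hsplit : (fun s : ℝ => (t - s) * s ^ k) = fun s => t * s ^ k - s ^ (k + 1) := by
    ext s; ring
  rw [hsplit, intervalIntegral.integral_sub
    ((by fun_prop : Continuous fun s : ℝ => t * s ^ k).intervalIntegrable _ _)
    ((continuous_pow _).intervalIntegrable _ _)]
  simp [integral_pow]
  field_simp
  ring

theorem integral_sub_mul_eq_of_hasDerivAt {f f' g : ℝ → ℝ} {a b : ℝ} (hab : a ≤ b)
    (hf : ∀ s ∈ Icc a b, HasDerivAt f (f' s) s) (hf' : ∀ s ∈ Icc a b, HasDerivAt f' (g s) s)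
    (hg : ContinuousOn g (Icc a b)) :
    ∫ s in a..b, (b - s) * g s = f b - f a - (b - a) * f' a := by
  have hprim : ∀ s ∈ uIcc a b, HasDerivAt (fun s => (b - s) * f' s + f s) ((b - s) * g s) s := by
    intro s hs
    rw [uIcc_of_le hab] at hs
    exact ((((hasDerivAt_id' s).const_sub b).mul (hf' s hs)).add (hf s hs)).congr_deriv (by ring)
  rw [intervalIntegral.integral_eq_sub_of_hasDerivAt hprim
    ((continuousOn_const.sub continuousOn_id).mul hg |>.intervalIntegrable_of_Icc hab)]
  ring

theorem le_mul_cube_div_five_of_le_integral {h : ℝ → ℝ} {R δ : ℝ} (hR : 0 ≤ R)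
    (hδR : δ ^ 2 * R ≤ 1) (hh : ContinuousOn h (Icc 0 δ))
    (hle : ∀ t ∈ Icc 0 δ, h t ≤ ∫ s in (0 : ℝ)..t, R * (t - s) * (s + h s)) :
    ∀ t ∈ Icc 0 δ, h t ≤ R * t ^ 3 / 5 := by
  intro t ht
  -- `c` is the least constant with `h s ≤ R s³ / 5 + c` on `[0, δ]`; feeding this bound back
  -- into `hle` improves it to `c / 2`, so `c = 0`.
  obtain ⟨t₀, ht₀, hmax⟩ := isCompact_Icc.exists_isMaxOn ⟨t, ht⟩
    (hh.sub (by fun_prop : Continuous fun s : ℝ => R * s ^ 3 / 5).continuousOn)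
  set c := max 0 (h t₀ - R * t₀ ^ 3 / 5)
  have hc0 : 0 ≤ c := le_max_left _ _
  have hc : ∀ s ∈ Icc 0 δ, h s ≤ R * s ^ 3 / 5 + c := fun s hs => by
    have : h s - R * s ^ 3 / 5 ≤ h t₀ - R * t₀ ^ 3 / 5 := isMaxOn_iff.1 hmax s hs
    linarith [le_max_right 0 (h t₀ - R * t₀ ^ 3 / 5)]
  have himp : ∀ s ∈ Icc 0 δ, h s ≤ R * s ^ 3 / 5 + c / 2 := by
    intro s hs
    have hsub : Icc 0 s ⊆ Icc 0 δ := Icc_subset_Icc le_rfl hs.2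
    have hi := intervalIntegrable_sub_mul_pow s
    have hRs : R * s ^ 2 ≤ 1 := by
      nlinarith [pow_le_pow_left₀ hs.1 hs.2 2]
    calc h s ≤ ∫ r in (0 : ℝ)..s, R * (s - r) * (r + h r) := hle s hs
      _ ≤ ∫ r in (0 : ℝ)..s, R * (s - r) * (r + (R * r ^ 3 / 5 + c)) := by
        refine intervalIntegral.integral_mono_on hs.1
          ((continuousOn_const.mul (continuousOn_const.sub continuousOn_id)).mul
            (continuousOn_id.add (hh.mono hsub)) |>.intervalIntegrable_of_Icc hs.1)
          ((by fun_prop : Continuous fun r : ℝ => R * (s - r) * (r + (R * r ^ 3 / 5 + c)))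
            |>.intervalIntegrable _ _) fun r hr => ?_
        have : 0 ≤ R * (s - r) := mul_nonneg hR (by linarith [hr.2])
        gcongr
        exact hc r (hsub hr)
      _ = ∫ r in (0 : ℝ)..s, (R * ((s - r) * r ^ 1) + R ^ 2 / 5 * ((s - r) * r ^ 3))
            + R * c * ((s - r) * r ^ 0) := by
        congr 1; ext r; ring
      _ = R * s ^ 3 / 6 + R * s ^ 3 * (R * s ^ 2) / 100 + c * (R * s ^ 2) / 2 := by
        rw [intervalIntegral.integral_add (((hi 1).const_mul _).add ((hi 3).const_mul _))
          ((hi 0).const_mul _), intervalIntegral.integral_add ((hi 1).const_mul _)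
          ((hi 3).const_mul _)]
        simp only [intervalIntegral.integral_const_mul, integral_sub_mul_pow]
        norm_num
        ring
      _ ≤ R * s ^ 3 / 6 + R * s ^ 3 * 1 / 100 + c * 1 / 2 := by
        have : 0 ≤ R * s ^ 3 := mul_nonneg hR (pow_nonneg hs.1 3)
        gcongr
      _ ≤ R * s ^ 3 / 5 + c / 2 := by
        nlinarith [mul_nonneg hR (pow_nonneg hs.1 3)]
  have : c ≤ c / 2 := max_le (by linarith) (by linarith [himp t₀ ht₀])
  linarith [himp t ht]

end Volterra

section JacobiEquation

variable {m : Type*} [Fintype m] {Φ Ψ : ℝ → Matrix m m ℝ} {δ R : ℝ}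

theorem sub_smul_one_eq_entrywiseIntegral [DecidableEq m] {Ψ' : ℝ → Matrix m m ℝ}
    (hΨ : ∀ t ∈ Icc 0 δ, ∀ i j, HasDerivAt (fun s => Ψ s i j) (Ψ' t i j) t)
    (hΨ' : ∀ t ∈ Icc 0 δ, ∀ i j, HasDerivAt (fun s => Ψ' s i j) ((Φ t * Ψ t) i j) t)
    (hΦΨ : ContinuousOn (fun t => Φ t * Ψ t) (Icc 0 δ)) (hΨ0 : Ψ 0 = 0) (hΨ'0 : Ψ' 0 = 1) :
    ∀ t ∈ Icc 0 δ, Ψ t - t • 1 = entrywiseIntegral (fun s => (t - s) • (Φ s * Ψ s)) 0 t := by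
  intro t ht
  have hsub : Icc 0 t ⊆ Icc 0 δ := Icc_subset_Icc le_rfl ht.2
  ext i j
  have := integral_sub_mul_eq_of_hasDerivAt ht.1 (fun s hs => hΨ s (hsub hs) i j)
    (fun s hs => hΨ' s (hsub hs) i j) (continuousOn_pi.1 (continuousOn_pi.1 (hΦΨ.mono hsub) i) j)
  simp [entrywiseIntegral, this, hΨ0, hΨ'0, one_apply]

theorem norm_sub_smul_one_le [DecidableEq m] (hR : 0 ≤ R) (hδR : δ ^ 2 * R ≤ 1)
    (hΦ : ContinuousOn Φ (Icc 0 δ)) (hΨ : ContinuousOn Ψ (Icc 0 δ))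
    (hΦR : ∀ t ∈ Icc 0 δ, ‖Φ t‖ ≤ R)
    (hrep : ∀ t ∈ Icc 0 δ, Ψ t - t • 1 = entrywiseIntegral (fun s => (t - s) • (Φ s * Ψ s)) 0 t) :
    ∀ t ∈ Icc 0 δ, ‖Ψ t - t • 1‖ ≤ R * t ^ 3 / 5 := by
  have hY : ContinuousOn (fun t => ‖Ψ t - t • (1 : Matrix m m ℝ)‖) (Icc 0 δ) :=
    continuous_norm.comp_continuousOn (hΨ.sub (continuousOn_id.smul continuousOn_const))
  refine le_mul_cube_div_five_of_le_integral hR hδR hY fun t ht => ?_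
  have hsub : Icc 0 t ⊆ Icc 0 δ := Icc_subset_Icc le_rfl ht.2
  rw [hrep t ht]
  refine norm_entrywiseIntegral_le ht.1
    ((continuousOn_const.sub continuousOn_id).smul (hΦ.matrix_mul hΨ) |>.mono hsub)
    ((continuousOn_const.mul (continuousOn_const.sub continuousOn_id)).mul
      (continuousOn_id.add (hY.mono hsub))) fun s hs => ?_
  have hsplit : Φ s * Ψ s = s • Φ s + Φ s * (Ψ s - s • 1) := by
    rw [mul_sub, Matrix.mul_smul, mul_one]
    abel
  have hts : 0 ≤ t - s := by linarith [hs.2]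
  calc ‖(t - s) • (Φ s * Ψ s)‖ ≤ (t - s) * (s * ‖Φ s‖ + ‖Φ s‖ * ‖Ψ s - s • 1‖) := by
        rw [norm_smul, Real.norm_of_nonneg hts, hsplit]
        gcongr
        refine (norm_add_le _ _).trans (add_le_add ?_ (frobenius_norm_mul _ _))
        rw [norm_smul, Real.norm_of_nonneg hs.1]
    _ ≤ R * (t - s) * (s + ‖Ψ s - s • 1‖) := by
        have := mul_le_mul_of_nonneg_right (hΦR s (hsub hs))
          (add_nonneg hs.1 (norm_nonneg (Ψ s - s • 1)))
        nlinarith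

theorem one_div_smul_sub_one_eq_add [DecidableEq m] (hδ : 0 < δ) (hΦ : ContinuousOn Φ (Icc 0 δ))
    (hΨ : ContinuousOn Ψ (Icc 0 δ))
    (hrep : Ψ δ - δ • 1 = entrywiseIntegral (fun s => (δ - s) • (Φ s * Ψ s)) 0 δ) :
    (1 / δ) • Ψ δ - 1 = entrywiseIntegral (fun s => (s * (δ - s) / δ) • Φ s) 0 δ
      + entrywiseIntegral (fun s => ((δ - s) / δ) • (Φ s * (Ψ s - s • 1))) 0 δ := by
  have hscale : (1 / δ) • Ψ δ - 1 = (1 / δ) • (Ψ δ - δ • 1) := by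
    rw [smul_sub, smul_smul, one_div_mul_cancel hδ.ne', one_smul]
  have hA : ContinuousOn (fun s => (s * (δ - s) / δ) • Φ s) (Icc 0 δ) :=
    (by fun_prop : Continuous fun s : ℝ => s * (δ - s) / δ).continuousOn.fun_smul hΦ
  have hE : ContinuousOn (fun s => ((δ - s) / δ) • (Φ s * (Ψ s - s • 1))) (Icc 0 δ) :=
    (by fun_prop : Continuous fun s : ℝ => (δ - s) / δ).continuousOn.fun_smul
      (hΦ.matrix_mul (hΨ.fun_sub (continuousOn_id.fun_smul continuousOn_const)))
  rw [hscale, hrep]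
  ext i j
  have hAij : IntervalIntegrable (fun s => s * (δ - s) / δ * Φ s i j) volume 0 δ :=
    intervalIntegrable_apply_of_continuousOn hδ.le hA i j
  have hEij : IntervalIntegrable (fun s => (δ - s) / δ * (Φ s * (Ψ s - s • 1)) i j) volume 0 δ :=
    intervalIntegrable_apply_of_continuousOn hδ.le hE i j
  simp only [entrywiseIntegral, Matrix.add_apply, Matrix.smul_apply, of_apply, smul_eq_mul]
  rw [← intervalIntegral.integral_add hAij hEij, ← intervalIntegral.integral_const_mul]
  congr 1
  ext s
  simp only [mul_sub, Matrix.mul_smul, mul_one, Matrix.sub_apply, Matrix.smul_apply, smul_eq_mul]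
  field_simp
  ring

theorem norm_entrywiseIntegral_weight_smul_le (hδ : 0 < δ) (hΦ : ContinuousOn Φ (Icc 0 δ))
    (hΦR : ∀ t ∈ Icc 0 δ, ‖Φ t‖ ≤ R) :
    ‖entrywiseIntegral (fun s => (s * (δ - s) / δ) • Φ s) 0 δ‖ ≤ δ ^ 2 * R / 6 := by
  calc _ ≤ ∫ s in (0 : ℝ)..δ, R / δ * ((δ - s) * s ^ 1) := by
        refine norm_entrywiseIntegral_le hδ.le
          ((by fun_prop : Continuous fun s : ℝ => s * (δ - s) / δ).continuousOn.fun_smul hΦ)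
          (by fun_prop : Continuous fun s : ℝ => R / δ * ((δ - s) * s ^ 1)).continuousOn
          fun s hs => ?_
        have hw : 0 ≤ s * (δ - s) / δ := div_nonneg (mul_nonneg hs.1 (by linarith [hs.2])) hδ.le
        rw [norm_smul, Real.norm_of_nonneg hw]
        calc s * (δ - s) / δ * ‖Φ s‖ ≤ s * (δ - s) / δ * R :=
              mul_le_mul_of_nonneg_left (hΦR s hs) hw
          _ = R / δ * ((δ - s) * s ^ 1) := by ring
    _ = δ ^ 2 * R / 6 := by
        rw [intervalIntegral.integral_const_mul, integral_sub_mul_pow]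
        field_simp
        ring

theorem trace_entrywiseIntegral_weight_smul (hδ : 0 ≤ δ) (hΦ : ContinuousOn Φ (Icc 0 δ)) :
    (entrywiseIntegral (fun s => (s * (δ - s) / δ) • Φ s) 0 δ).trace
      = ∫ t in (0 : ℝ)..δ, (t * (δ - t) / δ) * (Φ t).trace := by
  rw [trace_entrywiseIntegral (intervalIntegrable_apply_of_continuousOn hδ
    ((by fun_prop : Continuous fun s : ℝ => s * (δ - s) / δ).continuousOn.fun_smul hΦ))]
  simp only [trace_smul, smul_eq_mul]

theorem norm_and_abs_trace_entrywiseIntegral_weight_mul_le {Y : ℝ → Matrix m m ℝ} (hR : 0 ≤ R)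
    (hδ : 0 < δ) (hΦ : ContinuousOn Φ (Icc 0 δ)) (hY : ContinuousOn Y (Icc 0 δ))
    (hΦR : ∀ t ∈ Icc 0 δ, ‖Φ t‖ ≤ R) (hYR : ∀ t ∈ Icc 0 δ, ‖Y t‖ ≤ R * t ^ 3 / 5) :
    ‖entrywiseIntegral (fun s => ((δ - s) / δ) • (Φ s * Y s)) 0 δ‖ ≤ (δ ^ 2 * R) ^ 2 / 100 ∧
      |(entrywiseIntegral (fun s => ((δ - s) / δ) • (Φ s * Y s)) 0 δ).trace|
        ≤ (δ ^ 2 * R) ^ 2 / 100 := by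
  set g := fun s : ℝ => R ^ 2 / (5 * δ) * ((δ - s) * s ^ 3)
  have hg : ContinuousOn g (Icc 0 δ) := (by fun_prop : Continuous g).continuousOn
  have hgint : ∫ s in (0 : ℝ)..δ, g s = (δ ^ 2 * R) ^ 2 / 100 := by
    rw [intervalIntegral.integral_const_mul, integral_sub_mul_pow]
    field_simp
    ring
  have hF : ContinuousOn (fun s => ((δ - s) / δ) • (Φ s * Y s)) (Icc 0 δ) :=
    (by fun_prop : Continuous fun s : ℝ => (δ - s) / δ).continuousOn.fun_smul (hΦ.matrix_mul hY)
  have hw : ∀ s ∈ Icc 0 δ, 0 ≤ (δ - s) / δ := fun s hs => div_nonneg (by linarith [hs.2]) hδ.le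
  have hpt : ∀ s ∈ Icc 0 δ, (δ - s) / δ * (‖Φ s‖ * ‖Y s‖) ≤ g s := fun s hs => calc
    (δ - s) / δ * (‖Φ s‖ * ‖Y s‖) ≤ (δ - s) / δ * (R * (R * s ^ 3 / 5)) :=
      mul_le_mul_of_nonneg_left (mul_le_mul (hΦR s hs) (hYR s hs) (norm_nonneg _) hR) (hw s hs)
    _ = g s := by simp only [g]; field_simp
  rw [← hgint]
  constructor
  · refine norm_entrywiseIntegral_le hδ.le hF hg fun s hs => ?_
    rw [norm_smul, Real.norm_of_nonneg (hw s hs)]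
    exact (mul_le_mul_of_nonneg_left (frobenius_norm_mul _ _) (hw s hs)).trans (hpt s hs)
  · refine abs_trace_entrywiseIntegral_le hδ.le hF hg fun s hs => ?_
    rw [trace_smul, smul_eq_mul, abs_mul, abs_of_nonneg (hw s hs)]
    exact (mul_le_mul_of_nonneg_left (frobenius_abs_trace_mul_le _ _) (hw s hs)).trans (hpt s hs)

end JacobiEquation

theorem abs_log_det_one_add_sub_trace_le_of_eq_add {m : Type*} [Fintype m] [DecidableEq m]
    {B A E : Matrix m m ℝ} {x : ℝ} (hx0 : 0 ≤ x) (hx1 : x ≤ 1) (hB : B = A + E)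
    (hA : ‖A‖ ≤ x / 6) (hE : ‖E‖ ≤ x ^ 2 / 100) (htrE : |E.trace| ≤ x ^ 2 / 100) :
    ‖B‖ ≤ x / 5 ∧ |Real.log (1 + B).det - A.trace| ≤ x ^ 2 / 10 := by
  have hBx : ‖B‖ ≤ x / 5 := by
    rw [hB]
    nlinarith [norm_add_le A E]
  refine ⟨hBx, ?_⟩
  have hlog := abs_log_det_one_add_sub_trace_le (hBx.trans_lt (by linarith))
  have hquad : ‖B‖ ^ 2 / (2 * (1 - ‖B‖)) ≤ x ^ 2 / 40 := by
    rw [div_le_iff₀ (by linarith)]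
    nlinarith [norm_nonneg B]
  calc |Real.log (1 + B).det - A.trace|
      = |(Real.log (1 + B).det - B.trace) + E.trace| := by
        rw [hB, trace_add]
        ring_nf
    _ ≤ |Real.log (1 + B).det - B.trace| + |E.trace| := abs_add_le _ _
    _ ≤ x ^ 2 / 10 := by linarith [sq_nonneg x]

/-- Jacobian estimate for the Hamiltonian map, via the matrix ODE
`Ψ'' = Φ Ψ`, `Ψ(0) = 0`, `Ψ'(0) = I`. -/
theorem jacobian_determinant_estimate
    (n : ℕ) (δ R₁ : ℝ) (hδ : 0 < δ) (hδR : δ ^ 2 * R₁ ≤ 1)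
    (Φ Ψ Ψ' : ℝ → Matrix (Fin n) (Fin n) ℝ)
    (hΦcont : ∀ i j, ContinuousOn (fun t => Φ t i j) (Icc 0 δ))
    (hΦF : ∀ t ∈ Icc 0 δ, frobNorm (Φ t) ≤ R₁)
    (hΨ : ∀ t ∈ Icc 0 δ, ∀ i j, HasDerivAt (fun s => Ψ s i j) (Ψ' t i j) t)
    (hΨ' : ∀ t ∈ Icc 0 δ, ∀ i j, HasDerivAt (fun s => Ψ' s i j) ((Φ t * Ψ t) i j) t)
    (hΨ0 : Ψ 0 = 0) (hΨ'0 : Ψ' 0 = 1) :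
    frobNorm ((1/δ) • Ψ δ - 1) ≤ 1/5 ∧ IsUnit (Ψ δ) ∧
      |Real.log (((1/δ) • Ψ δ).det) -
          ∫ t in (0:ℝ)..δ, (t * (δ - t) / δ) * (Φ t).trace| ≤ (δ ^ 2 * R₁) ^ 2 / 10 := by
  have hR : 0 ≤ R₁ := (Real.sqrt_nonneg _).trans (hΦF 0 ⟨le_rfl, hδ.le⟩)
  have hΦR : ∀ t ∈ Icc 0 δ, ‖Φ t‖ ≤ R₁ := fun t ht => frobNorm_eq_norm (Φ t) ▸ hΦF t ht
  have hΦc : ContinuousOn Φ (Icc 0 δ) := continuousOn_pi.2 fun i => continuousOn_pi.2 (hΦcont i)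
  have hΨc : ContinuousOn Ψ (Icc 0 δ) := continuousOn_pi.2 fun i => continuousOn_pi.2 fun j t ht =>
    (hΨ t ht i j).continuousAt.continuousWithinAt
  have hrep := sub_smul_one_eq_entrywiseIntegral hΨ hΨ' (hΦc.matrix_mul hΨc) hΨ0 hΨ'0
  obtain ⟨hE, htrE⟩ := norm_and_abs_trace_entrywiseIntegral_weight_mul_le hR hδ hΦc
    (hΨc.fun_sub (continuousOn_id.fun_smul continuousOn_const)) hΦR
    (norm_sub_smul_one_le hR hδR hΦc hΨc hΦR hrep)
  obtain ⟨hB, hlog⟩ := abs_log_det_one_add_sub_trace_le_of_eq_add (mul_nonneg (sq_nonneg δ) hR)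
    hδR (one_div_smul_sub_one_eq_add hδ hΦc hΨc (hrep δ ⟨hδ.le, le_rfl⟩))
    (norm_entrywiseIntegral_weight_smul_le hδ hΦc hΦR) hE htrE
  rw [add_sub_cancel, trace_entrywiseIntegral_weight_smul hδ.le hΦc] at hlog
  have hunit := isUnit_one_add_of_norm_lt_one (hB.trans_lt (by linarith))
  rw [add_sub_cancel] at hunit
  refine ⟨by rw [frobNorm_eq_norm]; linarith, ?_, hlog⟩
  simpa [smul_smul, hδ.ne'] using (isUnit_smul_iff (Units.mk0 δ hδ.ne') _).2 hunit
end

section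
/- Let φ : [a, b] → ℝ be a twice continuously differentiable convex function such that φ'' is also convex on [a, b]. Then for every x ∈ [a, b], e^{−φ(x)} ≥ 0.372 · √(φ''(x)) · min( ∫_x^b e^{−φ(t)} dt, ∫_a^x e^{−φ(t)} dt ). -/
/-!
Fix `x` with `c = φ'' x > 0`, and let `p = φ' x`, `k = 0.372`. If `|p| ≥ k √c`, the tangent line at
`x` gives `e^{-φ t} ≤ e^{-φ x} e^{-|p| |t - x|}` on the side of `x` towards which `φ` increases, so
the integral over that side is at most `e^{-φ x} / |p|`. Otherwise, convexity of `φ''` forces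
`φ'' ≥ c` on one side of `x`; there `φ` lies above its second-order Taylor polynomial at `x`, and
completing the square bounds the integral over that side by the Gaussian integral
`e^{-φ x} √(2π/c) e^{p²/2c} ≤ e^{-φ x} / (k √c)`.
-/

open Set MeasureTheory Real

theorem ConvexOn.add_mul_sub_le_of_hasDerivWithinAt {S : Set ℝ} {f : ℝ → ℝ} {f' x y : ℝ}
    (hf : ConvexOn ℝ S f) (hx : x ∈ S) (hy : y ∈ S) (hf' : HasDerivWithinAt f f' S x) :
    f x + f' * (y - x) ≤ f y := by
  rcases lt_trichotomy x y with hxy | rfl | hyx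
  · have := hf.le_slope_of_hasDerivWithinAt hx hy hxy hf'
    rw [slope_def_field, le_div_iff₀ (sub_pos.mpr hxy)] at this
    linarith
  · simp
  · have := hf.slope_le_of_hasDerivWithinAt hy hx hyx hf'
    rw [slope_def_field, div_le_iff₀ (sub_pos.mpr hyx)] at this
    linarith

theorem ConvexOn.le_on_Icc_right_or_le_on_Icc_left {a b x : ℝ} {f : ℝ → ℝ}
    (hf : ConvexOn ℝ (Icc a b) f) (hx : x ∈ Icc a b) :
    (∀ t ∈ Icc x b, f x ≤ f t) ∨ (∀ t ∈ Icc a x, f x ≤ f t) := by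
  by_contra! ⟨⟨t, ht, hft⟩, ⟨s, hs, hfs⟩⟩
  have hxst : x ∈ segment ℝ s t := by
    rw [segment_eq_Icc (hs.2.trans ht.1)]
    exact ⟨hs.2, ht.1⟩
  have := hf.le_on_segment ⟨hs.1, hs.2.trans hx.2⟩ ⟨hx.1.trans ht.1, ht.2⟩ hxst
  exact this.not_gt (max_lt hfs hft)

theorem add_deriv_mul_add_sq_le_of_le_deriv2 {S D : Set ℝ} (hD : Convex ℝ D) (hDS : D ⊆ S)
    {f f' f'' : ℝ → ℝ} {c x y : ℝ} (hf' : ∀ t ∈ S, HasDerivWithinAt f (f' t) S t)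
    (hf'' : ∀ t ∈ S, HasDerivWithinAt f' (f'' t) S t) (hc : ∀ t ∈ D, c ≤ f'' t)
    (hx : x ∈ D) (hy : y ∈ D) :
    f x + f' x * (y - x) + c * (y - x) ^ 2 / 2 ≤ f y := by
  have hg' : ∀ t ∈ D,
      HasDerivWithinAt (fun t ↦ f t - c * (t - x) ^ 2 / 2) (f' t - c * (t - x)) D t :=
    fun t ht ↦ ((hf' t (hDS ht)).mono hDS).fun_sub
      ((((hasDerivWithinAt_id t D).sub_const x).fun_pow 2).const_mul c |>.div_const 2)
      |>.congr_deriv (by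
        simp only [Nat.cast_ofNat, id_eq, Nat.add_one_sub_one, pow_one, mul_one, sub_right_inj]
        ring)
  have hg'' : ∀ t ∈ D, HasDerivWithinAt (fun t ↦ f' t - c * (t - x)) (f'' t - c) D t :=
    fun t ht ↦ by
      simpa using ((hf'' t (hDS ht)).mono hDS).fun_sub
        (((hasDerivWithinAt_id t D).sub_const x).const_mul c)
  have hconv : ConvexOn ℝ D (fun t ↦ f t - c * (t - x) ^ 2 / 2) :=
    convexOn_of_hasDerivWithinAt2_nonneg hD (fun t ht ↦ (hg' t ht).continuousWithinAt)
      (fun t ht ↦ (hg' t (interior_subset ht)).mono interior_subset)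
      (fun t ht ↦ (hg'' t (interior_subset ht)).mono interior_subset)
      (fun t ht ↦ sub_nonneg.mpr (hc t (interior_subset ht)))
  have := hconv.add_mul_sub_le_of_hasDerivWithinAt hx hy (hg' x hx)
  simp only [sub_self] at this
  linarith

theorem integral_exp_neg_le_of_le_right {φ g : ℝ → ℝ} {x b : ℝ} (hxb : x ≤ b)
    (hφ : ContinuousOn φ (Icc x b)) (hg : Continuous g)
    (h : ∀ t ∈ Icc x b, φ x + g (t - x) ≤ φ t) :
    ∫ t in x..b, exp (-φ t) ≤ exp (-φ x) * ∫ u in 0..b - x, exp (-g u) :=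
  calc ∫ t in x..b, exp (-φ t) ≤ ∫ t in x..b, exp (-φ x) * exp (-g (t - x)) := by
        refine intervalIntegral.integral_mono_on hxb (hφ.neg.rexp.intervalIntegrable_of_Icc hxb)
          (Continuous.intervalIntegrable (by fun_prop) x b) fun t ht ↦ ?_
        rw [← exp_add]
        exact exp_le_exp.mpr (by linarith [h t ht])
    _ = exp (-φ x) * ∫ u in 0..b - x, exp (-g u) := by
        rw [intervalIntegral.integral_const_mul,
          intervalIntegral.integral_comp_sub_right (fun u ↦ exp (-g u)), sub_self]

theorem integral_exp_neg_le_of_le_left {φ g : ℝ → ℝ} {a x : ℝ} (hax : a ≤ x)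
    (hφ : ContinuousOn φ (Icc a x)) (hg : Continuous g)
    (h : ∀ t ∈ Icc a x, φ x + g (x - t) ≤ φ t) :
    ∫ t in a..x, exp (-φ t) ≤ exp (-φ x) * ∫ u in 0..x - a, exp (-g u) := by
  have hφneg : ContinuousOn (fun t ↦ φ (-t)) (Icc (-x) (-a)) :=
    hφ.comp continuousOn_neg fun t ht ↦ ⟨le_neg.mp ht.2, neg_le.mp ht.1⟩
  have := integral_exp_neg_le_of_le_right (neg_le_neg hax) hφneg hg fun t ht ↦ by
    simpa [sub_eq_add_neg, add_comm] using h (-t) ⟨le_neg.mp ht.2, neg_le.mp ht.1⟩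
  rwa [intervalIntegral.integral_comp_neg (fun t ↦ exp (-φ t)), neg_neg, neg_neg, neg_sub_neg]
    at this

theorem integral_exp_neg_mul_le {r T : ℝ} (hr : 0 < r) (hT : 0 ≤ T) :
    ∫ u in 0..T, exp (-(r * u)) ≤ 1 / r := by
  have hint : IntegrableOn (fun u ↦ exp (-r * u)) (Ioi 0) := exp_neg_integrableOn_Ioi 0 hr
  calc ∫ u in 0..T, exp (-(r * u)) = ∫ u in Ioc 0 T, exp (-r * u) := by
        simp [intervalIntegral.integral_of_le hT]
    _ ≤ ∫ u in Ioi 0, exp (-r * u) :=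
        setIntegral_mono_set hint (.of_forall fun _ ↦ (exp_pos _).le)
          Ioc_subset_Ioi_self.eventuallyLE
    _ = 1 / r := by
        rw [integral_exp_mul_Ioi (neg_neg_iff_pos.mpr hr)]
        simp [neg_div]

theorem integral_exp_neg_quadratic_le {r c T : ℝ} (hc : 0 < c) (hT : 0 ≤ T) :
    ∫ u in 0..T, exp (-(r * u + c * u ^ 2 / 2)) ≤ √(2 * π / c) * exp (r ^ 2 / (2 * c)) := by
  have hsquare : ∀ u, exp (-(r * u + c * u ^ 2 / 2))
      = exp (r ^ 2 / (2 * c)) * exp (-(c / 2) * (u + r / c) ^ 2) := fun u ↦ by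
    rw [← exp_add]
    congr 1
    field_simp
    ring
  have hint : Integrable (fun u ↦ exp (-(c / 2) * (u + r / c) ^ 2)) :=
    (integrable_exp_neg_mul_sq (half_pos hc)).comp_add_right (r / c)
  calc ∫ u in 0..T, exp (-(r * u + c * u ^ 2 / 2))
        = exp (r ^ 2 / (2 * c)) * ∫ u in Ioc 0 T, exp (-(c / 2) * (u + r / c) ^ 2) := by
        simp_rw [hsquare, intervalIntegral.integral_const_mul, intervalIntegral.integral_of_le hT]
    _ ≤ exp (r ^ 2 / (2 * c)) * ∫ u, exp (-(c / 2) * (u + r / c) ^ 2) :=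
        mul_le_mul_of_nonneg_left
          (setIntegral_le_integral hint (.of_forall fun _ ↦ (exp_pos _).le)) (exp_pos _).le
    _ = √(2 * π / c) * exp (r ^ 2 / (2 * c)) := by
        rw [integral_add_right_eq_self (fun u ↦ exp (-(c / 2) * u ^ 2)), integral_gaussian,
          mul_comm, div_div_eq_mul_div, mul_comm π]

theorem integral_exp_neg_le_of_le_abs_deriv {a b x s : ℝ} {φ φ' : ℝ → ℝ}
    (hd1 : ∀ t ∈ Icc a b, HasDerivWithinAt φ (φ' t) (Icc a b) t)
    (hconv : ConvexOn ℝ (Icc a b) φ) (hx : x ∈ Icc a b) (hs : 0 < s) (hp : s ≤ |φ' x|) :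
    ∫ t in x..b, exp (-φ t) ≤ exp (-φ x) / s ∨ ∫ t in a..x, exp (-φ t) ≤ exp (-φ x) / s := by
  have hφ : ContinuousOn φ (Icc a b) := fun t ht ↦ (hd1 t ht).continuousWithinAt
  have htangent : ∀ t ∈ Icc a b, φ x + φ' x * (t - x) ≤ φ t := fun t ht ↦
    hconv.add_mul_sub_le_of_hasDerivWithinAt hx ht (hd1 x hx)
  rcases le_abs'.mp hp with hp | hp
  · right
    calc ∫ t in a..x, exp (-φ t) ≤ exp (-φ x) * ∫ u in 0..x - a, exp (-(-φ' x * u)) :=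
          integral_exp_neg_le_of_le_left hx.1 (hφ.mono (Icc_subset_Icc_right hx.2))
            (by fun_prop) fun t ht ↦ by linarith [htangent t ⟨ht.1, ht.2.trans hx.2⟩]
      _ ≤ exp (-φ x) * (1 / -φ' x) := by
          gcongr
          exact integral_exp_neg_mul_le (by linarith) (sub_nonneg.mpr hx.1)
      _ ≤ exp (-φ x) / s := by
          rw [mul_one_div]
          gcongr
          linarith
  · left
    calc ∫ t in x..b, exp (-φ t) ≤ exp (-φ x) * ∫ u in 0..b - x, exp (-(φ' x * u)) :=
          integral_exp_neg_le_of_le_right hx.2 (hφ.mono (Icc_subset_Icc_left hx.1))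
            (by fun_prop) fun t ht ↦ htangent t ⟨hx.1.trans ht.1, ht.2⟩
      _ ≤ exp (-φ x) * (1 / φ' x) := by
          gcongr
          exact integral_exp_neg_mul_le (hs.trans_le hp) (sub_nonneg.mpr hx.2)
      _ ≤ exp (-φ x) / s := by
          rw [mul_one_div]
          gcongr

theorem integral_exp_neg_le_of_pos_deriv2 {a b x : ℝ} {φ φ' φ'' : ℝ → ℝ}
    (hd1 : ∀ t ∈ Icc a b, HasDerivWithinAt φ (φ' t) (Icc a b) t)
    (hd2 : ∀ t ∈ Icc a b, HasDerivWithinAt φ' (φ'' t) (Icc a b) t)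
    (hconv'' : ConvexOn ℝ (Icc a b) φ'') (hx : x ∈ Icc a b) (hc : 0 < φ'' x) :
    ∫ t in x..b, exp (-φ t) ≤ exp (-φ x) * (√(2 * π / φ'' x) * exp (φ' x ^ 2 / (2 * φ'' x))) ∨
      ∫ t in a..x, exp (-φ t) ≤
        exp (-φ x) * (√(2 * π / φ'' x) * exp (φ' x ^ 2 / (2 * φ'' x))) := by
  have hφ : ContinuousOn φ (Icc a b) := fun t ht ↦ (hd1 t ht).continuousWithinAt
  have hxb : Icc x b ⊆ Icc a b := Icc_subset_Icc_left hx.1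
  have hax : Icc a x ⊆ Icc a b := Icc_subset_Icc_right hx.2
  rcases hconv''.le_on_Icc_right_or_le_on_Icc_left hx with hcurv | hcurv
  · left
    calc ∫ t in x..b, exp (-φ t)
          ≤ exp (-φ x) * ∫ u in 0..b - x, exp (-(φ' x * u + φ'' x * u ^ 2 / 2)) :=
          integral_exp_neg_le_of_le_right hx.2 (hφ.mono hxb) (by fun_prop) fun t ht ↦ by
            linarith [add_deriv_mul_add_sq_le_of_le_deriv2 (convex_Icc x b) hxb hd1 hd2 hcurv
              (left_mem_Icc.mpr hx.2) ht]
      _ ≤ _ := by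
          gcongr
          exact integral_exp_neg_quadratic_le hc (sub_nonneg.mpr hx.2)
  · right
    calc ∫ t in a..x, exp (-φ t)
          ≤ exp (-φ x) * ∫ u in 0..x - a, exp (-(-φ' x * u + φ'' x * u ^ 2 / 2)) :=
          integral_exp_neg_le_of_le_left hx.1 (hφ.mono hax) (by fun_prop) fun t ht ↦ by
            linarith [add_deriv_mul_add_sq_le_of_le_deriv2 (convex_Icc a x) hax hd1 hd2 hcurv
              (right_mem_Icc.mpr hx.1) ht]
      _ ≤ _ := by
          rw [← neg_sq (φ' x)]
          gcongr
          exact integral_exp_neg_quadratic_le hc (sub_nonneg.mpr hx.1)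

theorem sqrt_two_pi_div_mul_exp_le {k c p : ℝ} (hk : 0 < k)
    (hk1 : k * √(2 * π) * exp (k ^ 2 / 2) ≤ 1) (hc : 0 < c) (hp : |p| ≤ k * √c) :
    √(2 * π / c) * exp (p ^ 2 / (2 * c)) ≤ 1 / (k * √c) := by
  have hσ : 0 < √c := sqrt_pos.mpr hc
  have hp2 : p ^ 2 / (2 * c) ≤ k ^ 2 / 2 := by
    rw [div_le_div_iff₀ (by positivity) two_pos, ← sq_abs]
    nlinarith [sq_sqrt hc.le, abs_nonneg p]
  calc √(2 * π / c) * exp (p ^ 2 / (2 * c)) ≤ √(2 * π) / √c * exp (k ^ 2 / 2) := by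
        rw [sqrt_div' _ hc.le]
        gcongr
    _ ≤ 1 / (k * √c) := by
        rw [div_mul_eq_mul_div, div_le_div_iff₀ hσ (by positivity)]
        nlinarith

/-- The product is `≈ 0.99927`, so `0.372` is essentially the best constant this argument gives. -/
theorem mul_sqrt_two_pi_mul_exp_le_one : (0.372 : ℝ) * √(2 * π) * exp (0.372 ^ 2 / 2) ≤ 1 := by
  have hπ : √(2 * π) ≤ 2.5067 := sqrt_le_iff.mpr ⟨by norm_num, by nlinarith [pi_lt_d4]⟩
  have hexp : exp (0.372 ^ 2 / 2) ≤ 1.0717 := by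
    refine (exp_bound' (by norm_num) (by norm_num) (n := 3) (by norm_num)).trans ?_
    norm_num [Finset.sum_range_succ, Nat.factorial]
  calc (0.372 : ℝ) * √(2 * π) * exp (0.372 ^ 2 / 2) ≤ 0.372 * 2.5067 * 1.0717 := by gcongr
    _ ≤ 1 := by norm_num

theorem one_dim_isoperimetry_general
    (a b : ℝ)
    (φ φ' φ'' : ℝ → ℝ)
    (hd1 : ∀ t ∈ Icc a b, HasDerivWithinAt φ (φ' t) (Icc a b) t)
    (hd2 : ∀ t ∈ Icc a b, HasDerivWithinAt φ' (φ'' t) (Icc a b) t)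
    (hconv : ConvexOn ℝ (Icc a b) φ)
    (hconv'' : ConvexOn ℝ (Icc a b) φ'') :
    ∀ x ∈ Icc a b,
      Real.exp (-φ x) ≥ 0.372 * Real.sqrt (φ'' x) *
        min (∫ t in x..b, Real.exp (-φ t)) (∫ t in a..x, Real.exp (-φ t)) := by
  intro x hx
  rcases le_or_gt (φ'' x) 0 with hc | hc
  · rw [sqrt_eq_zero'.mpr hc, mul_zero, zero_mul]
    exact (exp_pos _).le
  have hs : (0 : ℝ) < 0.372 * √(φ'' x) := by positivity
  have hside : ∫ t in x..b, exp (-φ t) ≤ exp (-φ x) / (0.372 * √(φ'' x)) ∨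
      ∫ t in a..x, exp (-φ t) ≤ exp (-φ x) / (0.372 * √(φ'' x)) := by
    rcases le_or_gt (0.372 * √(φ'' x)) |φ' x| with hp | hp
    · exact integral_exp_neg_le_of_le_abs_deriv hd1 hconv hx hs hp
    · have hgauss :=
        sqrt_two_pi_div_mul_exp_le (by norm_num) mul_sqrt_two_pi_mul_exp_le_one hc hp.le
      rw [div_eq_mul_one_div]
      refine (integral_exp_neg_le_of_pos_deriv2 hd1 hd2 hconv'' hx hc).imp ?_ ?_ <;>
        exact fun h ↦ h.trans (by gcongr)
  rw [ge_iff_le, ← le_div_iff₀' hs]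
  exact hside.elim (min_le_left _ _).trans (min_le_right _ _).trans

/-- one-dimensional isoperimetric inequality for `e^{-φ}` when both
`φ` and `φ''` are convex. -/
theorem one_dim_isoperimetry
    (a b : ℝ) (hab : a ≤ b)
    (φ φ' φ'' : ℝ → ℝ)
    (hd1 : ∀ t ∈ Icc a b, HasDerivWithinAt φ (φ' t) (Icc a b) t)
    (hd2 : ∀ t ∈ Icc a b, HasDerivWithinAt φ' (φ'' t) (Icc a b) t)
    (hcont : ContinuousOn φ'' (Icc a b))
    (hconv : ConvexOn ℝ (Icc a b) φ)
    (hconv'' : ConvexOn ℝ (Icc a b) φ'') :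
    ∀ x ∈ Icc a b,
      Real.exp (-φ x) ≥ 0.372 * Real.sqrt (φ'' x) *
        min (∫ t in x..b, Real.exp (-φ t)) (∫ t in a..x, Real.exp (-φ t)) :=
  one_dim_isoperimetry_general a b φ φ' φ'' hd1 hd2 hconv hconv''
end

section
/- There exists a universal constant C > 0 such that the following holds. Let φ : [a, b] → ℝ be a twice continuously differentiable convex function such that φ'' is convex on [a, b] and m := min_{x ∈ [a, b]} φ''(x) > 0, and let X be a random variable on [a, b] with density proportional to e^{−φ(x)}. Then Var(X) ≤ C / m. -/
/-!
Let `c` minimise `φ` on `[a, b]`. Since `φ'' ≥ m`, the function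
`x ↦ (x - c) φ'(x) - m/2 (x - c)² - φ(x)` decreases up to `c` and increases after it, which gives
`(x - c) φ'(x) ≥ φ(x) - φ(c) + m/2 (x - c)² ≥ m/2 (x - c)²`. Integrating by parts,
`∫ (x - c) φ' e^{-φ} = ∫ e^{-φ} - [(x - c) e^{-φ}]_a^b ≤ ∫ e^{-φ}`, because the boundary term is
nonnegative. Hence `E[(X - c)²] ≤ 2 / m`, and the variance is at most the second moment about
any point.
-/

open Set Real intervalIntegral
open MeasureTheory (volume)

theorem isMinOn_Icc_of_mul_deriv_nonneg {f f' : ℝ → ℝ} {a b c : ℝ} (hc : c ∈ Icc a b)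
    (hf : ∀ x ∈ Icc a b, HasDerivWithinAt f (f' x) (Icc a b) x)
    (hsign : ∀ x ∈ Icc a b, 0 ≤ (x - c) * f' x) : IsMinOn f (Icc a b) c := by
  have hcont : ContinuousOn f (Icc a b) := fun x hx ↦ (hf x hx).continuousWithinAt
  have hderiv : ∀ x ∈ Ioo a b, HasDerivAt f (f' x) x := fun x hx ↦
    (hf x (Ioo_subset_Icc_self hx)).hasDerivAt (Icc_mem_nhds hx.1 hx.2)
  intro x hx
  rcases le_total c x with hcx | hxc
  · have hmono : MonotoneOn f (Icc c b) := by
      refine monotoneOn_of_hasDerivWithinAt_nonneg (f' := f') (convex_Icc c b)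
        (hcont.mono (Icc_subset_Icc_left hc.1)) ?_ ?_ <;> rw [interior_Icc] <;> intro y hy
      · exact (hderiv y ⟨hc.1.trans_lt hy.1, hy.2⟩).hasDerivWithinAt
      · exact nonneg_of_mul_nonneg_right (hsign y ⟨hc.1.trans hy.1.le, hy.2.le⟩)
          (sub_pos.2 hy.1)
    exact hmono ⟨le_rfl, hc.2⟩ ⟨hcx, hx.2⟩ hcx
  · have hanti : AntitoneOn f (Icc a c) := by
      refine antitoneOn_of_hasDerivWithinAt_nonpos (f' := f') (convex_Icc a c)
        (hcont.mono (Icc_subset_Icc_right hc.2)) ?_ ?_ <;> rw [interior_Icc] <;> intro y hy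
      · exact (hderiv y ⟨hy.1, hy.2.trans_le hc.2⟩).hasDerivWithinAt
      · exact nonpos_of_mul_nonneg_right (hsign y ⟨hy.1.le, hy.2.le.trans hc.2⟩)
          (sub_neg.2 hy.2)
    exact hanti ⟨hx.1, hxc⟩ ⟨hc.1, le_rfl⟩ hxc

theorem sub_add_half_mul_sq_le_mul_deriv {φ φ' φ'' : ℝ → ℝ} {a b c m x : ℝ}
    (hc : c ∈ Icc a b) (hx : x ∈ Icc a b)
    (hφ : ∀ t ∈ Icc a b, HasDerivWithinAt φ (φ' t) (Icc a b) t)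
    (hφ' : ∀ t ∈ Icc a b, HasDerivWithinAt φ' (φ'' t) (Icc a b) t)
    (hm : ∀ t ∈ Icc a b, m ≤ φ'' t) :
    φ x - φ c + m / 2 * (x - c) ^ 2 ≤ (x - c) * φ' x := by
  have hH : ∀ t ∈ Icc a b, HasDerivWithinAt
      (fun t ↦ (t - c) * φ' t - m / 2 * (t - c) ^ 2 - φ t) ((t - c) * (φ'' t - m)) (Icc a b) t := by
    intro t ht
    have hlin := (hasDerivWithinAt_id t (Icc a b)).sub_const c
    exact (((hlin.mul (hφ' t ht)).sub ((hlin.pow 2).const_mul (m / 2))).sub (hφ t ht)).congr_deriv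
      (by simp only [id_eq]; ring)
  have hmin := isMinOn_Icc_of_mul_deriv_nonneg hc hH fun t ht ↦ by
    have := sub_nonneg.2 (hm t ht)
    nlinarith [sq_nonneg (t - c)]
  have hcx : -φ c ≤ (x - c) * φ' x - m / 2 * (x - c) ^ 2 - φ x := by simpa using hmin hx
  linarith

theorem integral_mul_deriv_mul_exp_neg_le {φ φ' : ℝ → ℝ} {a b c : ℝ} (hc : c ∈ Icc a b)
    (hφ : ∀ t ∈ Icc a b, HasDerivWithinAt φ (φ' t) (Icc a b) t)
    (hφ'int : IntervalIntegrable φ' volume a b) :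
    ∫ x in a..b, (x - c) * φ' x * exp (-φ x) ≤ ∫ x in a..b, exp (-φ x) := by
  have hab : uIcc a b = Icc a b := uIcc_of_le (hc.1.trans hc.2)
  have hE : ∀ x ∈ uIcc a b, HasDerivWithinAt (fun x ↦ exp (-φ x))
      (exp (-φ x) * -φ' x) (uIcc a b) x := fun x hx ↦ by
    rw [hab] at hx ⊢
    exact (hφ x hx).neg.exp
  have hEc : ContinuousOn (fun x ↦ exp (-φ x)) (uIcc a b) := fun x hx ↦ (hE x hx).continuousWithinAt
  have hparts := integral_deriv_mul_eq_sub_of_hasDerivWithinAt (u := fun x ↦ x - c)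
    (fun x _ ↦ (hasDerivWithinAt_id x _).sub_const c) hE intervalIntegrable_const
    (hφ'int.neg.continuousOn_mul hEc)
  have hboundary : 0 ≤ (b - c) * exp (-φ b) - (a - c) * exp (-φ a) := by
    nlinarith [exp_pos (-φ a), exp_pos (-φ b), hc.1, hc.2]
  have hint : IntervalIntegrable (fun x ↦ (x - c) * φ' x * exp (-φ x)) volume a b :=
    (hφ'int.continuousOn_mul (continuousOn_id.sub continuousOn_const)).mul_continuousOn hEc
  have hintegrand : (fun x ↦ 1 * exp (-φ x) + (x - c) * (exp (-φ x) * -φ' x)) =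
      fun x ↦ exp (-φ x) - (x - c) * φ' x * exp (-φ x) := by
    ext x
    ring
  rw [hintegrand, integral_sub hEc.intervalIntegrable hint] at hparts
  linarith

theorem variance_le_integral_sub_sq_mul_div {w : ℝ → ℝ} {a b : ℝ} (c : ℝ)
    (hw : IntervalIntegrable w volume a b) :
    (∫ x in a..b, x ^ 2 * w x) / (∫ x in a..b, w x) -
        ((∫ x in a..b, x * w x) / (∫ x in a..b, w x)) ^ 2 ≤
      (∫ x in a..b, (x - c) ^ 2 * w x) / (∫ x in a..b, w x) := by
  have hw₁ : IntervalIntegrable (fun x ↦ x * w x) volume a b := hw.continuousOn_mul continuousOn_id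
  have hw₂ : IntervalIntegrable (fun x ↦ x ^ 2 * w x) volume a b :=
    hw.continuousOn_mul (continuousOn_id.pow 2)
  have hexpand : ∫ x in a..b, (x - c) ^ 2 * w x =
      (∫ x in a..b, x ^ 2 * w x) - 2 * c * (∫ x in a..b, x * w x) + c ^ 2 * ∫ x in a..b, w x := by
    rw [← integral_const_mul, ← integral_const_mul, ← integral_sub hw₂ (hw₁.const_mul _),
      ← integral_add (hw₂.sub (hw₁.const_mul _)) (hw.const_mul _)]
    congr 1
    ext x
    ring
  rcases eq_or_ne (∫ x in a..b, w x) 0 with hI | hI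
  · simp [hI]
  rw [hexpand]
  have hshift : (∫ x in a..b, x ^ 2 * w x) / (∫ x in a..b, w x) -
        ((∫ x in a..b, x * w x) / (∫ x in a..b, w x)) ^ 2 =
      ((∫ x in a..b, x ^ 2 * w x) - 2 * c * (∫ x in a..b, x * w x) + c ^ 2 * ∫ x in a..b, w x) /
          (∫ x in a..b, w x) - ((∫ x in a..b, x * w x) / (∫ x in a..b, w x) - c) ^ 2 := by
    field_simp
    ring
  rw [hshift]
  linarith [sq_nonneg ((∫ x in a..b, x * w x) / (∫ x in a..b, w x) - c)]

theorem integral_sub_sq_mul_exp_neg_le {φ φ' φ'' : ℝ → ℝ} {a b c m : ℝ} (hm : 0 < m)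
    (hc : c ∈ Icc a b) (hmin : IsMinOn φ (Icc a b) c)
    (hφ : ∀ t ∈ Icc a b, HasDerivWithinAt φ (φ' t) (Icc a b) t)
    (hφ' : ∀ t ∈ Icc a b, HasDerivWithinAt φ' (φ'' t) (Icc a b) t)
    (hφ'' : ∀ t ∈ Icc a b, m ≤ φ'' t) :
    ∫ x in a..b, (x - c) ^ 2 * exp (-φ x) ≤ 2 / m * ∫ x in a..b, exp (-φ x) := by
  have hab : a ≤ b := hc.1.trans hc.2
  have hEc : ContinuousOn (fun x ↦ exp (-φ x)) (uIcc a b) := by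
    rw [uIcc_of_le hab]
    exact continuous_exp.comp_continuousOn fun x hx ↦ (hφ x hx).continuousWithinAt.neg
  have hφ'c : ContinuousOn φ' (uIcc a b) := by
    rw [uIcc_of_le hab]
    exact fun x hx ↦ (hφ' x hx).continuousWithinAt
  have hpointwise : ∀ x ∈ Icc a b,
      m / 2 * ((x - c) ^ 2 * exp (-φ x)) ≤ (x - c) * φ' x * exp (-φ x) := fun x hx ↦ by
    rw [← mul_assoc]
    refine mul_le_mul_of_nonneg_right ?_ (exp_pos _).le
    have htangent := sub_add_half_mul_sq_le_mul_deriv hc hx hφ hφ' hφ''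
    have hcx : φ c ≤ φ x := hmin hx
    linarith
  calc ∫ x in a..b, (x - c) ^ 2 * exp (-φ x)
      = 2 / m * ∫ x in a..b, m / 2 * ((x - c) ^ 2 * exp (-φ x)) := by
        rw [integral_const_mul]
        field_simp
    _ ≤ 2 / m * ∫ x in a..b, (x - c) * φ' x * exp (-φ x) := by
        gcongr
        refine integral_mono_on hab (ContinuousOn.intervalIntegrable ?_)
          (ContinuousOn.intervalIntegrable ?_) hpointwise <;> fun_prop
    _ ≤ 2 / m * ∫ x in a..b, exp (-φ x) := by
        gcongr
        exact integral_mul_deriv_mul_exp_neg_le hc hφ hφ'c.intervalIntegrable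

/-- variance bound for a log-concave density `∝ e^{-φ}` on `[a,b]`
when `φ` and `φ''` are convex and `φ'' ≥ m > 0`. -/
theorem variance_bound_convex_second_derivative :
    ∃ C : ℝ, 0 < C ∧
      ∀ (a b : ℝ), a ≤ b → ∀ (φ φ' φ'' : ℝ → ℝ),
        (∀ t ∈ Icc a b, HasDerivWithinAt φ (φ' t) (Icc a b) t) →
        (∀ t ∈ Icc a b, HasDerivWithinAt φ' (φ'' t) (Icc a b) t) →
        ContinuousOn φ'' (Icc a b) →
        ConvexOn ℝ (Icc a b) φ →
        ConvexOn ℝ (Icc a b) φ'' →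
        ∀ m : ℝ, 0 < m → IsLeast (φ'' '' Icc a b) m →
          (∫ x in a..b, x ^ 2 * Real.exp (-φ x)) / (∫ x in a..b, Real.exp (-φ x)) -
              ((∫ x in a..b, x * Real.exp (-φ x)) / (∫ x in a..b, Real.exp (-φ x))) ^ 2
            ≤ C / m := by
  refine ⟨2, two_pos, fun a b hab φ φ' φ'' hφ hφ' _ _ _ m hm hleast ↦ ?_⟩
  have hφc : ContinuousOn φ (Icc a b) := fun t ht ↦ (hφ t ht).continuousWithinAt
  obtain ⟨c, hc, hmin⟩ := isCompact_Icc.exists_isMinOn (nonempty_Icc.2 hab) hφc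
  have hEint : IntervalIntegrable (fun x ↦ exp (-φ x)) volume a b := by
    refine ContinuousOn.intervalIntegrable ?_
    rw [uIcc_of_le hab]
    exact continuous_exp.comp_continuousOn hφc.neg
  calc _ ≤ (∫ x in a..b, (x - c) ^ 2 * exp (-φ x)) / ∫ x in a..b, exp (-φ x) :=
        variance_le_integral_sub_sq_mul_div c hEint
    _ ≤ 2 / m := div_le_of_le_mul₀ (integral_nonneg hab fun x _ ↦ (exp_pos _).le) (by positivity)
        (integral_sub_sq_mul_exp_neg_le hm hc hmin hφ hφ' fun t ht ↦
          hleast.2 (mem_image_of_mem φ'' ht))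
end

section
/- Let P = {x ∈ ℝ^n : Ax > b} be a nonempty open polytope, where A ∈ ℝ^{m×n} has rank n, let φ(x) = −Σ_{i=1}^m ln(a_iᵀx − b_i) be its logarithmic barrier, and let f = α·φ with α > 0. Then for every x ∈ P: (1) ∇f(x)ᵀ (A_xᵀA_x)⁻¹ ∇f(x) ≤ α² m; (2) ∇²f(x) = α A_xᵀA_x, so in particular ∇²f(x) ⪯ α A_xᵀA_x in the positive semidefinite order; and (3) for every v ∈ ℝ^n, |tr((A_xᵀA_x)⁻¹ ∇³f(x)[v])| ≤ 2α √n · √(vᵀ A_xᵀA_x v), where ∇³f(x)[v] is the n×n matrix with entries D³f(x)[v, e_i, e_j]. -/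
open Set Matrix

/-- The rescaled constraint matrix `A_x = S_x⁻¹ A`, whose `i`-th row is
`a_i / (a_iᵀx − b_i)`. -/
noncomputable def slackMat (m n : ℕ) (A : Matrix (Fin m) (Fin n) ℝ) (b : Fin m → ℝ)
    (x : Fin n → ℝ) : Matrix (Fin m) (Fin n) ℝ :=
  Matrix.of fun i j => A i j / (A.mulVec x i - b i)

/-- The log-barrier Hessian metric `g(x) = A_xᵀ A_x`. -/
noncomputable def barrierG (m n : ℕ) (A : Matrix (Fin m) (Fin n) ℝ) (b : Fin m → ℝ)
    (x : Fin n → ℝ) : Matrix (Fin n) (Fin n) ℝ :=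
  (slackMat m n A b x)ᵀ * slackMat m n A b x

open scoped Nat

/-!
Each directional derivative of `-log (aᵢᵀy - bᵢ)` only produces another factor `aᵢᵀv / sᵢ`, so
`D^{k+1} f(x)[v₁, …, v_{k+1}] = (-1)^{k+1} α k! ∑ᵢ ∏ⱼ (A_x vⱼ)ᵢ`. Hence `∇f(x) = -α A_xᵀ𝟙`,
`∇²f(x) = α A_xᵀA_x` and `∇³f(x)[v] = -2α A_xᵀ Diag(A_x v) A_x`. Since `A` has full column rank,
`P = A_x (A_xᵀA_x)⁻¹ A_xᵀ` is an orthogonal projection of trace `n`. Bound (1) is `𝟙ᵀP𝟙 ≤ 𝟙ᵀ𝟙 = m`.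
In (3) the trace equals `∑ₖ Pₖₖ (A_x v)ₖ`, which Cauchy–Schwarz bounds using `Pₖₖ² ≤ Pₖₖ`,
`∑ₖ Pₖₖ = n` and `|A_x v|² = vᵀA_xᵀA_x v`.
-/

theorem Real.iteratedDeriv_succ_log (k : ℕ) (x : ℝ) :
    iteratedDeriv (k + 1) Real.log x = (-1) ^ k * k ! * (x ^ (k + 1))⁻¹ := by
  have hprod : ∏ i ∈ Finset.range k, ((-1 : ℤ) - i : ℝ) = (-1) ^ k * k ! := by
    induction k with
    | zero => simp
    | succ k ih => rw [Finset.prod_range_succ, ih, pow_succ, Nat.factorial_succ]; push_cast; ring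
  rw [iteratedDeriv_succ', Real.deriv_log', iteratedDeriv_eq_iterate]
  have h := iter_deriv_zpow (-1 : ℤ) x k
  simp only [_root_.zpow_neg_one] at h
  rw [h, hprod, show (-1 : ℤ) - k = -((k + 1 : ℕ) : ℤ) by push_cast; ring, _root_.zpow_neg,
    zpow_natCast]

section
variable {E : Type*} [NormedAddCommGroup E] [NormedSpace ℝ E]

theorem iteratedFDeriv_log_comp_sub_apply (ℓ : E →L[ℝ] ℝ) (c : ℝ) {x : E} (hx : ℓ x ≠ c)
    (k : ℕ) (v : Fin (k + 1) → E) :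
    iteratedFDeriv ℝ (k + 1) (fun y => Real.log (ℓ y - c)) x v =
      (-1) ^ k * k ! * ∏ j, ℓ (v j) / (ℓ x - c) := by
  -- `t ↦ log (t - c)` is smooth only on `{c}ᶜ`, so the chain rule is applied within that open set.
  set s : Set ℝ := {c}ᶜ
  have hs : IsOpen s := isOpen_compl_singleton
  have hg : ContDiffOn ℝ (k + 1) (fun t => Real.log (t - c)) s :=
    (Real.contDiffOn_log.comp (contDiff_id.sub contDiff_const).contDiffOn
      fun t ht => sub_ne_zero.2 ht)
  have hxs : ℓ x ∈ s := hx
  have hcomp := ℓ.iteratedFDerivWithin_comp_right hg hs.uniqueDiffOn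
    (hs.preimage ℓ.continuous).uniqueDiffOn hxs (i := k + 1) (by norm_num)
  rw [iteratedFDerivWithin_of_isOpen _ (hs.preimage ℓ.continuous) hxs,
    iteratedFDerivWithin_of_isOpen _ hs hxs] at hcomp
  rw [show (fun y => Real.log (ℓ y - c)) = (fun t => Real.log (t - c)) ∘ ℓ from rfl, hcomp,
    ContinuousMultilinearMap.compContinuousLinearMap_apply,
    iteratedFDeriv_apply_eq_iteratedDeriv_mul_prod, iteratedDeriv_comp_sub_const]
  dsimp only
  rw [Real.iteratedDeriv_succ_log, Finset.prod_div_distrib, Finset.prod_const, Finset.card_univ,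
    Fintype.card_fin, smul_eq_mul]
  ring

theorem iteratedFDeriv_succ_logBarrier_apply {ι : Type*} [Fintype ι] (ℓ : ι → E →L[ℝ] ℝ)
    (c : ι → ℝ) (α : ℝ) {x : E} (hx : ∀ i, ℓ i x ≠ c i) (k : ℕ) (v : Fin (k + 1) → E) :
    iteratedFDeriv ℝ (k + 1) (fun y => α * -∑ i, Real.log (ℓ i y - c i)) x v =
      (-1) ^ (k + 1) * α * k ! * ∑ i, ∏ j, ℓ i (v j) / (ℓ i x - c i) := by
  have hlog : ∀ i, ContDiffAt ℝ (k + 1 : ℕ) (fun y => Real.log (ℓ i y - c i)) x := fun i =>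
    ((ℓ i).contDiff.sub contDiff_const).contDiffAt.log (sub_ne_zero.2 (hx i))
  have hsum : ContDiffAt ℝ (k + 1 : ℕ) (fun y => -∑ i, Real.log (ℓ i y - c i)) x :=
    (ContDiffAt.sum fun i _ => hlog i).neg
  have hscale := iteratedFDeriv_const_smul_apply' (a := α) hsum
  simp only [smul_eq_mul] at hscale
  have hneg : (fun y => -∑ i, Real.log (ℓ i y - c i)) = -fun y => ∑ i, Real.log (ℓ i y - c i) :=
    rfl
  rw [hscale, hneg, iteratedFDeriv_neg_apply, iteratedFDeriv_fun_sum_apply fun i _ => hlog i]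
  simp only [_root_.smul_apply, _root_.neg_apply, _root_.sum_apply,
    iteratedFDeriv_log_comp_sub_apply _ _ (hx _), ← Finset.mul_sum, smul_eq_mul]
  ring

end

section HatMatrix
variable {ι κ : Type*} [Fintype ι] [Fintype κ] [DecidableEq κ]

theorem Matrix.isUnit_of_rank_eq_card {K : Type*} [Field K] {M : Matrix κ κ K}
    (hM : M.rank = Fintype.card κ) : IsUnit M := by
  rw [← mulVec_surjective_iff_isUnit, ← coe_mulVecLin, ← LinearMap.range_eq_top]
  apply Submodule.eq_top_of_finrank_eq
  rw [Module.finrank_fintype_fun_eq_card]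
  exact hM

theorem Matrix.isUnit_det_transpose_mul_self {B : Matrix ι κ ℝ}
    (hB : B.rank = Fintype.card κ) : IsUnit (Bᵀ * B).det :=
  (isUnit_iff_isUnit_det _).1 (isUnit_of_rank_eq_card (by rw [rank_transpose_mul_self, hB]))

/-- The paper's `P_x` is `hatMatrix A_x`; its diagonal is the leverage-score vector `σ_x`. -/
noncomputable def hatMatrix (B : Matrix ι κ ℝ) : Matrix ι ι ℝ := B * (Bᵀ * B)⁻¹ * Bᵀ

theorem hatMatrix_transpose (B : Matrix ι κ ℝ) : (hatMatrix B)ᵀ = hatMatrix B := by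
  simp [hatMatrix, transpose_mul, transpose_nonsing_inv, Matrix.mul_assoc]

theorem hatMatrix_mul_self {B : Matrix ι κ ℝ} (hB : B.rank = Fintype.card κ) :
    hatMatrix B * hatMatrix B = hatMatrix B := by
  have hG := nonsing_inv_mul _ (isUnit_det_transpose_mul_self hB)
  calc hatMatrix B * hatMatrix B = B * ((Bᵀ * B)⁻¹ * (Bᵀ * B)) * (Bᵀ * B)⁻¹ * Bᵀ := by
        simp only [hatMatrix, Matrix.mul_assoc]
    _ = hatMatrix B := by rw [hG, Matrix.mul_one, hatMatrix]

theorem trace_hatMatrix {B : Matrix ι κ ℝ} (hB : B.rank = Fintype.card κ) :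
    (hatMatrix B).trace = Fintype.card κ := by
  rw [hatMatrix, trace_mul_comm, ← Matrix.mul_assoc,
    mul_nonsing_inv _ (isUnit_det_transpose_mul_self hB), trace_one]

theorem hatMatrix_diag_sq_le {B : Matrix ι κ ℝ} (hB : B.rank = Fintype.card κ) (k : ι) :
    hatMatrix B k k ^ 2 ≤ hatMatrix B k k := by
  have hdiag : hatMatrix B k k = ∑ l, hatMatrix B k l ^ 2 := by
    conv_lhs => rw [← hatMatrix_mul_self hB]
    rw [mul_apply]
    refine Finset.sum_congr rfl fun l _ => ?_
    rw [sq, ← transpose_apply (hatMatrix B) l k, hatMatrix_transpose]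
  calc hatMatrix B k k ^ 2 ≤ ∑ l, hatMatrix B k l ^ 2 :=
        Finset.single_le_sum (f := fun l => hatMatrix B k l ^ 2) (fun l _ => sq_nonneg _)
          (Finset.mem_univ k)
    _ = hatMatrix B k k := hdiag.symm

theorem dotProduct_hatMatrix_mulVec {B : Matrix ι κ ℝ} (hB : B.rank = Fintype.card κ)
    (w : ι → ℝ) : w ⬝ᵥ hatMatrix B *ᵥ w = hatMatrix B *ᵥ w ⬝ᵥ hatMatrix B *ᵥ w := by
  conv_lhs => rw [← hatMatrix_mul_self hB, ← mulVec_mulVec]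
  rw [dotProduct_mulVec, ← mulVec_transpose, hatMatrix_transpose]

theorem dotProduct_hatMatrix_mulVec_le {B : Matrix ι κ ℝ} (hB : B.rank = Fintype.card κ)
    (w : ι → ℝ) : w ⬝ᵥ hatMatrix B *ᵥ w ≤ w ⬝ᵥ w := by
  have h := dotProduct_hatMatrix_mulVec hB w
  have hnn : 0 ≤ (w - hatMatrix B *ᵥ w) ⬝ᵥ (w - hatMatrix B *ᵥ w) :=
    Finset.sum_nonneg fun i _ => mul_self_nonneg _
  simp only [sub_dotProduct, dotProduct_sub, dotProduct_comm (hatMatrix B *ᵥ w) w] at hnn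
  linarith

theorem transpose_mulVec_dotProduct_inv_mulVec (B : Matrix ι κ ℝ) (w : ι → ℝ) :
    Bᵀ *ᵥ w ⬝ᵥ (Bᵀ * B)⁻¹ *ᵥ Bᵀ *ᵥ w = w ⬝ᵥ hatMatrix B *ᵥ w := by
  rw [hatMatrix, ← mulVec_mulVec, ← mulVec_mulVec, dotProduct_mulVec w B, ← mulVec_transpose]

theorem trace_inv_mul_transpose_mul_diagonal_mul [DecidableEq ι] (B : Matrix ι κ ℝ)
    (d : ι → ℝ) :
    ((Bᵀ * B)⁻¹ * (Bᵀ * diagonal d * B)).trace = ∑ k, hatMatrix B k k * d k := by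
  rw [show (Bᵀ * B)⁻¹ * (Bᵀ * diagonal d * B) = ((Bᵀ * B)⁻¹ * Bᵀ * diagonal d) * B by
      simp only [Matrix.mul_assoc], trace_mul_comm,
    show B * ((Bᵀ * B)⁻¹ * Bᵀ * diagonal d) = hatMatrix B * diagonal d by
      simp only [hatMatrix, Matrix.mul_assoc]]
  simp [trace, mul_diagonal]

theorem abs_sum_hatMatrix_diag_mul_le {B : Matrix ι κ ℝ} (hB : B.rank = Fintype.card κ)
    (d : ι → ℝ) :
    |∑ k, hatMatrix B k k * d k| ≤ √(Fintype.card κ) * √(d ⬝ᵥ d) := by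
  have hσ : ∑ k, hatMatrix B k k ^ 2 ≤ Fintype.card κ := by
    rw [← trace_hatMatrix hB]
    exact Finset.sum_le_sum fun k _ => hatMatrix_diag_sq_le hB k
  have hcs := Finset.sum_mul_sq_le_sq_mul_sq Finset.univ (fun k => hatMatrix B k k) d
  have hd : ∑ k, d k ^ 2 = d ⬝ᵥ d := by simp [dotProduct, sq]
  rw [← Real.sqrt_sq_eq_abs, ← Real.sqrt_mul (Nat.cast_nonneg _)]
  refine Real.sqrt_le_sqrt (hcs.trans ?_)
  rw [hd]
  exact mul_le_mul_of_nonneg_right hσ (Finset.sum_nonneg fun i _ => mul_self_nonneg (d i))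

end HatMatrix

noncomputable def Matrix.rowCLM {ι κ : Type*} [Fintype κ] (A : Matrix ι κ ℝ) (i : ι) :
    (κ → ℝ) →L[ℝ] ℝ :=
  LinearMap.toContinuousLinearMap (LinearMap.proj i ∘ₗ A.mulVecLin)

section LogBarrier
variable {m n : ℕ} {A : Matrix (Fin m) (Fin n) ℝ} {b : Fin m → ℝ} {x : Fin n → ℝ}

theorem slackMat_mulVec_apply (v : Fin n → ℝ) (i : Fin m) :
    (slackMat m n A b x *ᵥ v) i = (A *ᵥ v) i / ((A *ᵥ x) i - b i) := by
  simp [slackMat, mulVec, dotProduct, Finset.sum_div, div_mul_eq_mul_div]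

theorem slackMat_eq_diagonal_mul :
    slackMat m n A b x = diagonal (fun i => ((A *ᵥ x) i - b i)⁻¹) * A := by
  ext i j
  simp [slackMat, diagonal_mul, div_eq_inv_mul]

theorem rank_slackMat (hx : ∀ i, (A *ᵥ x) i ≠ b i) : (slackMat m n A b x).rank = A.rank := by
  rw [slackMat_eq_diagonal_mul, rank_mul_eq_right_of_isUnit_det]
  simpa [det_diagonal, Finset.prod_ne_zero_iff, sub_eq_zero] using hx

theorem dotProduct_barrierG_mulVec (v : Fin n → ℝ) :
    v ⬝ᵥ barrierG m n A b x *ᵥ v = slackMat m n A b x *ᵥ v ⬝ᵥ slackMat m n A b x *ᵥ v := by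
  rw [barrierG, ← mulVec_mulVec, dotProduct_mulVec, ← mulVec_transpose, transpose_transpose]

variable {α : ℝ} {f : (Fin n → ℝ) → ℝ}

theorem iteratedFDeriv_succ_barrier_apply
    (hf : ∀ y, f y = α * (-(∑ i, Real.log (A.mulVec y i - b i))))
    (hx : ∀ i, (A *ᵥ x) i ≠ b i) (k : ℕ) (v : Fin (k + 1) → Fin n → ℝ) :
    iteratedFDeriv ℝ (k + 1) f x v =
      (-1) ^ (k + 1) * α * k ! * ∑ i, ∏ j, (slackMat m n A b x *ᵥ v j) i := by
  rw [show f = fun y => α * -∑ i, Real.log (A.rowCLM i y - b i) from funext hf,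
    iteratedFDeriv_succ_logBarrier_apply _ _ _ hx]
  simp only [slackMat_mulVec_apply]
  rfl

theorem gradient_barrier_eq
    (hf : ∀ y, f y = α * (-(∑ i, Real.log (A.mulVec y i - b i))))
    (hx : ∀ i, (A *ᵥ x) i ≠ b i) :
    (fun k => fderiv ℝ f x (Pi.single k 1)) = -α • ((slackMat m n A b x)ᵀ *ᵥ fun _ => 1) := by
  ext k
  rw [← iteratedFDeriv_one_apply (fun _ => Pi.single k 1),
    iteratedFDeriv_succ_barrier_apply hf hx 0]
  simp only [mulVec_single_one]
  simp [mulVec, dotProduct]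

theorem hessian_barrier_eq
    (hf : ∀ y, f y = α * (-(∑ i, Real.log (A.mulVec y i - b i))))
    (hx : ∀ i, (A *ᵥ x) i ≠ b i) :
    (Matrix.of fun i j => iteratedFDeriv ℝ 2 f x ![Pi.single i 1, Pi.single j 1]) =
      α • barrierG m n A b x := by
  ext i j
  rw [of_apply, iteratedFDeriv_succ_barrier_apply hf hx 1]
  simp [barrierG, mul_apply, Finset.mul_sum]

theorem thirdDeriv_barrier_eq
    (hf : ∀ y, f y = α * (-(∑ i, Real.log (A.mulVec y i - b i))))
    (hx : ∀ i, (A *ᵥ x) i ≠ b i) (v : Fin n → ℝ) :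
    (Matrix.of fun i j => iteratedFDeriv ℝ 3 f x ![v, Pi.single i 1, Pi.single j 1]) =
      (-(2 * α)) • ((slackMat m n A b x)ᵀ * diagonal (slackMat m n A b x *ᵥ v) *
        slackMat m n A b x) := by
  ext i j
  rw [of_apply, iteratedFDeriv_succ_barrier_apply hf hx 2, Matrix.smul_apply, mul_apply]
  simp [mul_diagonal, Fin.prod_univ_three, Finset.mul_sum, -Finset.sum_neg_distrib]
  exact Finset.sum_congr rfl fun l _ => by ring

end LogBarrier

theorem log_barrier_parameters_general
    (m n : ℕ) (A : Matrix (Fin m) (Fin n) ℝ) (b : Fin m → ℝ)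
    (hrank : A.rank = n)
    (P : Set (Fin n → ℝ)) (hP : P = {x | ∀ i, b i < A.mulVec x i})
    (α : ℝ) (hα : 0 < α)
    (f : (Fin n → ℝ) → ℝ)
    (hf : ∀ x, f x = α * (-(∑ i, Real.log (A.mulVec x i - b i))))
    (x : Fin n → ℝ) (hx : x ∈ P) :
    (fun k => fderiv ℝ f x (Pi.single k 1)) ⬝ᵥ
        (barrierG m n A b x)⁻¹.mulVec (fun k => fderiv ℝ f x (Pi.single k 1)) ≤
      α ^ 2 * m ∧
    (Matrix.of fun i j =>
        iteratedFDeriv ℝ 2 f x ![Pi.single i 1, Pi.single j 1]) =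
      α • barrierG m n A b x ∧
    (α • barrierG m n A b x -
        Matrix.of fun i j =>
          iteratedFDeriv ℝ 2 f x ![Pi.single i 1, Pi.single j 1]).PosSemidef ∧
    ∀ v : Fin n → ℝ,
      |((barrierG m n A b x)⁻¹ *
          Matrix.of fun i j =>
            iteratedFDeriv ℝ 3 f x ![v, Pi.single i 1, Pi.single j 1]).trace| ≤
        2 * α * Real.sqrt n * Real.sqrt (v ⬝ᵥ (barrierG m n A b x).mulVec v) := by
  have hslack : ∀ i, (A *ᵥ x) i ≠ b i := by
    rw [hP] at hx
    exact fun i => (hx i).ne'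
  have hB : (slackMat m n A b x).rank = Fintype.card (Fin n) := by
    rw [rank_slackMat hslack, hrank, Fintype.card_fin]
  have hess := hessian_barrier_eq hf hslack
  refine ⟨?_, hess, by rw [hess, sub_self]; exact PosSemidef.zero, fun v => ?_⟩
  · rw [gradient_barrier_eq hf hslack, mulVec_smul, smul_dotProduct, dotProduct_smul, barrierG,
      transpose_mulVec_dotProduct_inv_mulVec, smul_eq_mul, smul_eq_mul, ← mul_assoc, neg_mul_neg,
      ← sq]
    have hones : (fun _ : Fin m => (1 : ℝ)) ⬝ᵥ (fun _ => 1) = m := by simp [dotProduct]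
    exact mul_le_mul_of_nonneg_left (hones ▸ dotProduct_hatMatrix_mulVec_le hB _) (sq_nonneg α)
  · rw [dotProduct_barrierG_mulVec, thirdDeriv_barrier_eq hf hslack v, Matrix.mul_smul,
      trace_smul, barrierG, trace_inv_mul_transpose_mul_diagonal_mul, smul_eq_mul, abs_mul, abs_neg,
      abs_of_pos (by positivity), mul_assoc (2 * α)]
    have hσ := abs_sum_hatMatrix_diag_mul_le hB (slackMat m n A b x *ᵥ v)
    rw [Fintype.card_fin] at hσ
    exact mul_le_mul_of_nonneg_left hσ (by positivity)

/-- the smoothness parameters of `f = α·φ` for the logarithmic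
barrier `φ` are `M₁ = α²m` (gradient), `M₂ = α` (Hessian) and `M₃ = 2α√n`
(third derivative trace). -/
theorem log_barrier_parameters
    (m n : ℕ) (A : Matrix (Fin m) (Fin n) ℝ) (b : Fin m → ℝ)
    (hrank : A.rank = n)
    (P : Set (Fin n → ℝ)) (hP : P = {x | ∀ i, b i < A.mulVec x i})
    (hPne : P.Nonempty)
    (α : ℝ) (hα : 0 < α)
    (f : (Fin n → ℝ) → ℝ)
    (hf : ∀ x, f x = α * (-(∑ i, Real.log (A.mulVec x i - b i))))
    (x : Fin n → ℝ) (hx : x ∈ P) :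
    (fun k => fderiv ℝ f x (Pi.single k 1)) ⬝ᵥ
        (barrierG m n A b x)⁻¹.mulVec (fun k => fderiv ℝ f x (Pi.single k 1)) ≤
      α ^ 2 * m ∧
    (Matrix.of fun i j =>
        iteratedFDeriv ℝ 2 f x ![Pi.single i 1, Pi.single j 1]) =
      α • barrierG m n A b x ∧
    (α • barrierG m n A b x -
        Matrix.of fun i j =>
          iteratedFDeriv ℝ 2 f x ![Pi.single i 1, Pi.single j 1]).PosSemidef ∧
    ∀ v : Fin n → ℝ,
      |((barrierG m n A b x)⁻¹ *
          Matrix.of fun i j =>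
            iteratedFDeriv ℝ 3 f x ![v, Pi.single i 1, Pi.single j 1]).trace| ≤
        2 * α * Real.sqrt n * Real.sqrt (v ⬝ᵥ (barrierG m n A b x).mulVec v) :=
  log_barrier_parameters_general m n A b hrank P hP α hα f hf x hx
end

section
/- Let P = {x ∈ ℝ^n : Ax > b} be a nonempty open polytope where A ∈ ℝ^{m×n} has rank n, let f : P → ℝ be smooth, and let M₁ satisfy M₁ ≥ n and M₁ ≥ ∇f(x)ᵀ(A_xᵀA_x)⁻¹∇f(x) for all x ∈ P. Let γ : [0, T] → P be twice continuously differentiable and satisfy γ''(t) = (A_γᵀA_γ)⁻¹A_γᵀ(A_γγ'(t))² + μ(γ(t)) for all t, where μ(x) = (A_xᵀA_x)⁻¹A_xᵀσ_x − (A_xᵀA_x)⁻¹∇f(x) and (A_γγ')² is the coordinatewise square. Let v₄ = ‖A_{γ(0)}γ'(0)‖₄. Then for all t with 0 ≤ t ≤ min(T, 1/(12(v₄ + M₁^{1/4}))): (1) ‖A_{γ(t)}γ'(t)‖₄ ≤ 2v₄ + M₁^{1/4}; and (2) γ''(t)ᵀ A_{γ(t)}ᵀA_{γ(t)} γ''(t)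 ≤ 128 v₄⁴ + 30 M₁. -/
open Set Matrix Finset Filter Topology

/-- The projection matrix `P_x = A_x (A_xᵀA_x)⁻¹ A_xᵀ`. -/
noncomputable def projMat (m n : ℕ) (A : Matrix (Fin m) (Fin n) ℝ) (b : Fin m → ℝ)
    (x : Fin n → ℝ) : Matrix (Fin m) (Fin m) ℝ :=
  slackMat m n A b x * (barrierG m n A b x)⁻¹ * (slackMat m n A b x)ᵀ

/-- The drift `μ(x) = (A_xᵀA_x)⁻¹A_xᵀσ_x − (A_xᵀA_x)⁻¹∇f(x)`. -/
noncomputable def driftMu (m n : ℕ) (A : Matrix (Fin m) (Fin n) ℝ) (b : Fin m → ℝ)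
    (f : (Fin n → ℝ) → ℝ) (x : Fin n → ℝ) : Fin n → ℝ :=
  (barrierG m n A b x)⁻¹.mulVec
      ((slackMat m n A b x)ᵀ.mulVec (fun i => projMat m n A b x i i)) -
    (barrierG m n A b x)⁻¹.mulVec (fun k => fderiv ℝ f x (Pi.single k 1))

/-- The ℓ₄ norm on `Fin m → ℝ`. -/
noncomputable def l4norm {m : ℕ} (w : Fin m → ℝ) : ℝ :=
  (∑ i, |w i| ^ 4) ^ ((1:ℝ)/4)


noncomputable def e2' {m : ℕ} (v : Fin m → ℝ) : ℝ := Real.sqrt (∑ i, v i ^ 2)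

lemma e2'_nonneg {m : ℕ} (v : Fin m → ℝ) : 0 ≤ e2' v := Real.sqrt_nonneg _

lemma e2'_sq {m : ℕ} (v : Fin m → ℝ) : e2' v ^ 2 = ∑ i, v i ^ 2 :=
  Real.sq_sqrt (Finset.sum_nonneg fun _ _ => sq_nonneg _)

lemma e2'_triangle {m : ℕ} (v w : Fin m → ℝ) :
    e2' (fun i => v i + w i) ≤ e2' v + e2' w := by
  have hcs := Real.sum_mul_le_sqrt_mul_sqrt Finset.univ v w
  have hv := e2'_sq v; have hw := e2'_sq w
  have h1 : ∑ i, (v i + w i) ^ 2 ≤ (e2' v + e2' w) ^ 2 := by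
    have he : ∑ i, (v i + w i) ^ 2 = ∑ i, v i ^ 2 + 2 * (∑ i, v i * w i) + ∑ i, w i ^ 2 := by
      rw [Finset.mul_sum, ← Finset.sum_add_distrib, ← Finset.sum_add_distrib]
      exact Finset.sum_congr rfl fun i _ => by ring
    rw [he, add_sq]
    unfold e2' at *
    nlinarith [hcs, hv, hw]
  calc e2' (fun i => v i + w i) ≤ Real.sqrt ((e2' v + e2' w) ^ 2) := Real.sqrt_le_sqrt h1
  _ = e2' v + e2' w := Real.sqrt_sq (add_nonneg (e2'_nonneg v) (e2'_nonneg w))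

lemma e2'_le_sqrt {m : ℕ} (v : Fin m → ℝ) (a : ℝ) (h : ∑ i, v i ^ 2 ≤ a) :
    e2' v ≤ Real.sqrt a := Real.sqrt_le_sqrt h

lemma e2'_neg {m : ℕ} (v : Fin m → ℝ) : e2' (fun i => - v i) = e2' v := by
  unfold e2'; congr 1; exact Finset.sum_congr rfl fun i _ => by ring

lemma e2'_triangle3 {m : ℕ} (v w z : Fin m → ℝ) :
    e2' (fun i => v i + w i + z i) ≤ e2' v + e2' w + e2' z := by
  calc e2' (fun i => (v i + w i) + z i) ≤ e2' (fun i => v i + w i) + e2' z :=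
        e2'_triangle _ _
  _ ≤ e2' v + e2' w + e2' z := by
      have := e2'_triangle v w; linarith

section matAux
variable {m n : ℕ} {A : Matrix (Fin m) (Fin n) ℝ} {b : Fin m → ℝ} {x : Fin n → ℝ}

lemma slack_mulVec_eq (v : Fin n → ℝ) (i : Fin m) :
    (slackMat m n A b x).mulVec v i = A.mulVec v i / (A.mulVec x i - b i) := by
  simp only [slackMat, Matrix.mulVec, dotProduct, Matrix.of_apply]
  rw [Finset.sum_div]
  exact Finset.sum_congr rfl fun j _ => by ring

/-- `A` with full column rank has injective `mulVec`. -/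
lemma mulVec_inj_of_rank (hrank : A.rank = n) : Function.Injective A.mulVec := by
  have h := LinearMap.finrank_range_add_finrank_ker A.mulVecLin
  have hfr : Module.finrank ℝ (Fin n → ℝ) = n := by simp
  rw [hfr] at h
  have hr : Module.finrank ℝ (LinearMap.range A.mulVecLin) = n := hrank
  have hker : Module.finrank ℝ (LinearMap.ker A.mulVecLin) = 0 := by omega
  have : LinearMap.ker A.mulVecLin = ⊥ := Submodule.finrank_eq_zero.mp hker
  have hinj : Function.Injective A.mulVecLin := LinearMap.ker_eq_bot.mp this
  exact hinj

lemma dot_mulVec_self {k l : ℕ} (B : Matrix (Fin k) (Fin l) ℝ) (z : Fin l → ℝ) :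
    (B.mulVec z) ⬝ᵥ (B.mulVec z) = z ⬝ᵥ ((Bᵀ * B).mulVec z) := by
  conv_rhs => rw [← Matrix.mulVec_mulVec, Matrix.dotProduct_mulVec, Matrix.vecMul_transpose]

lemma slack_inj (hrank : A.rank = n) (hx : ∀ i, b i < A.mulVec x i) :
    Function.Injective (slackMat m n A b x).mulVec := by
  intro u v huv
  apply mulVec_inj_of_rank hrank
  funext i
  have h1 := congrFun huv i
  rw [slack_mulVec_eq, slack_mulVec_eq] at h1
  have hs : A.mulVec x i - b i ≠ 0 := ne_of_gt (sub_pos.2 (hx i))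
  field_simp at h1
  exact h1

lemma barrierG_isUnit (hrank : A.rank = n) (hx : ∀ i, b i < A.mulVec x i) :
    IsUnit (barrierG m n A b x) := by
  rw [← Matrix.mulVec_injective_iff_isUnit]
  intro u v huv
  have hsub : (barrierG m n A b x).mulVec (u - v) = 0 := by
    rw [Matrix.mulVec_sub, huv, sub_self]
  set d := u - v with hd
  have hq : (slackMat m n A b x).mulVec d ⬝ᵥ (slackMat m n A b x).mulVec d = 0 := by
    rw [dot_mulVec_self]
    show d ⬝ᵥ (barrierG m n A b x).mulVec d = 0
    rw [hsub]; simp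
  have hzero : (slackMat m n A b x).mulVec d = 0 := by
    funext i
    have hnn : ∀ j ∈ Finset.univ, (0:ℝ) ≤ (slackMat m n A b x).mulVec d j *
        (slackMat m n A b x).mulVec d j := fun j _ => mul_self_nonneg _
    have := (Finset.sum_eq_zero_iff_of_nonneg hnn).mp hq i (Finset.mem_univ i)
    simpa [mul_self_eq_zero] using this
  have : d = 0 := by
    have h0 : (slackMat m n A b x).mulVec d = (slackMat m n A b x).mulVec 0 := by
      simpa [Matrix.mulVec_zero] using hzero
    simpa using slack_inj hrank hx h0
  have : u = v := by rwa [hd, sub_eq_zero] at this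
  exact this

end matAux

section projAux
variable {m n : ℕ} {A : Matrix (Fin m) (Fin n) ℝ} {b : Fin m → ℝ} {x : Fin n → ℝ}
variable (hrank : A.rank = n) (hx : ∀ i, b i < A.mulVec x i)

lemma barrierG_det_isUnit (hrank : A.rank = n) (hx : ∀ i, b i < A.mulVec x i) :
    IsUnit (barrierG m n A b x).det :=
  (Matrix.isUnit_iff_isUnit_det _).mp (barrierG_isUnit hrank hx)

lemma barrierG_transpose : (barrierG m n A b x)ᵀ = barrierG m n A b x := by
  unfold barrierG; rw [Matrix.transpose_mul, Matrix.transpose_transpose]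

lemma barrierG_inv_transpose : ((barrierG m n A b x)⁻¹)ᵀ = (barrierG m n A b x)⁻¹ := by
  rw [Matrix.transpose_nonsing_inv, barrierG_transpose]

lemma barrierG_mul_inv (hrank : A.rank = n) (hx : ∀ i, b i < A.mulVec x i) :
    barrierG m n A b x * (barrierG m n A b x)⁻¹ = 1 :=
  Matrix.mul_nonsing_inv _ (barrierG_det_isUnit hrank hx)

lemma barrierG_inv_mul (hrank : A.rank = n) (hx : ∀ i, b i < A.mulVec x i) :
    (barrierG m n A b x)⁻¹ * barrierG m n A b x = 1 :=
  Matrix.nonsing_inv_mul _ (barrierG_det_isUnit hrank hx)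

lemma projMat_symm : (projMat m n A b x)ᵀ = projMat m n A b x := by
  unfold projMat
  rw [Matrix.transpose_mul, Matrix.transpose_mul, Matrix.transpose_transpose,
    barrierG_inv_transpose, Matrix.mul_assoc]

lemma projMat_idem (hrank : A.rank = n) (hx : ∀ i, b i < A.mulVec x i) :
    projMat m n A b x * projMat m n A b x = projMat m n A b x := by
  unfold projMat
  have : slackMat m n A b x * (barrierG m n A b x)⁻¹ * (slackMat m n A b x)ᵀ *
      (slackMat m n A b x * (barrierG m n A b x)⁻¹ * (slackMat m n A b x)ᵀ)
      = slackMat m n A b x * ((barrierG m n A b x)⁻¹ * (barrierG m n A b x) *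
        (barrierG m n A b x)⁻¹) * (slackMat m n A b x)ᵀ := by
    unfold barrierG; simp only [Matrix.mul_assoc]
  rw [this, barrierG_inv_mul hrank hx, Matrix.one_mul]

/-- For a symmetric idempotent `Q`, `‖Q v‖ ≤ ‖v‖` and `‖v - Q v‖ ≤ ‖v‖`. -/
lemma proj_contract_aux {k : ℕ} (Q : Matrix (Fin k) (Fin k) ℝ) (hsym : Qᵀ = Q)
    (hidem : Q * Q = Q) (v : Fin k → ℝ) :
    e2' (Q.mulVec v) ≤ e2' v ∧ e2' (fun i => Q.mulVec v i - v i) ≤ e2' v := by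
  set q := Q.mulVec v with hq
  have key : q ⬝ᵥ q = v ⬝ᵥ q := by
    rw [hq, dot_mulVec_self, hsym, hidem]
  simp only [dotProduct] at key
  have hkey : ∑ i, q i * q i = ∑ i, v i * q i := key
  have hpos : (0:ℝ) ≤ ∑ i, (v i - q i) ^ 2 := Finset.sum_nonneg fun _ _ => sq_nonneg _
  have hexp : ∑ i, (v i - q i) ^ 2 = ∑ i, v i ^ 2 - ∑ i, v i * q i := by
    have : ∀ i : Fin k, (v i - q i) ^ 2 = v i ^ 2 - 2 * (v i * q i) + q i * q i := by
      intro i; ring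
    rw [Finset.sum_congr rfl fun i _ => this i, Finset.sum_add_distrib,
      Finset.sum_sub_distrib, ← Finset.mul_sum, hkey]
    ring
  have hq2 : ∑ i, q i ^ 2 = ∑ i, v i * q i := by
    rw [← hkey]; exact Finset.sum_congr rfl fun i _ => (sq (q i)).symm ▸ by ring
  have hqnn : (0:ℝ) ≤ ∑ i, v i * q i := by
    rw [← hq2]; exact Finset.sum_nonneg fun _ _ => sq_nonneg _
  constructor
  · unfold e2'
    apply Real.sqrt_le_sqrt
    rw [hq2]; linarith
  · unfold e2'
    apply Real.sqrt_le_sqrt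
    have hsw : ∑ i, (q i - v i) ^ 2 = ∑ i, (v i - q i) ^ 2 :=
      Finset.sum_congr rfl fun i _ => by ring
    rw [hsw, hexp]; linarith

end projAux
section l4Aux
variable {m : ℕ}

lemma l4norm_nonneg (v : Fin m → ℝ) : 0 ≤ l4norm v :=
  Real.rpow_nonneg (Finset.sum_nonneg fun _ _ => by positivity) _

lemma l4_sq (v : Fin m → ℝ) : (l4norm v) ^ 2 = e2' (fun i => v i ^ 2) := by
  have hs : (0:ℝ) ≤ ∑ i, |v i| ^ 4 := Finset.sum_nonneg fun _ _ => by positivity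
  have h4 : ∑ i, |v i| ^ 4 = ∑ i, (v i ^ 2) ^ 2 :=
    Finset.sum_congr rfl fun i _ => by rw [← abs_pow]; rw [show (v i ^ 2) ^ 2 = v i ^ 4 by ring]; exact abs_of_nonneg (by positivity)
  unfold l4norm e2'
  rw [← Real.rpow_natCast ((∑ i, |v i| ^ 4) ^ ((1:ℝ)/4)) 2, ← Real.rpow_mul hs,
    Real.sqrt_eq_rpow, h4]
  norm_num

lemma l4_le_e2 (v : Fin m → ℝ) : l4norm v ≤ e2' v := by
  have hs : (0:ℝ) ≤ ∑ i, |v i| ^ 4 := Finset.sum_nonneg fun _ _ => by positivity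
  have hkey : ∑ i, |v i| ^ 4 ≤ (∑ i, v i ^ 2) ^ 2 := by
    have h4 : ∑ i, |v i| ^ 4 = ∑ i, (v i ^ 2) ^ 2 :=
      Finset.sum_congr rfl fun i _ => by rw [← abs_pow]; rw [show (v i ^ 2) ^ 2 = v i ^ 4 by ring]; exact abs_of_nonneg (by positivity)
    rw [h4]
    exact Finset.sum_sq_le_sq_sum_of_nonneg fun i _ => sq_nonneg _
  unfold l4norm e2'
  calc (∑ i, |v i| ^ 4) ^ ((1:ℝ)/4) ≤ ((∑ i, v i ^ 2) ^ 2) ^ ((1:ℝ)/4) :=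
        Real.rpow_le_rpow hs hkey (by norm_num)
  _ = Real.sqrt (∑ i, v i ^ 2) := by
      rw [← Real.rpow_natCast (∑ i, v i ^ 2) 2,
        ← Real.rpow_mul (Finset.sum_nonneg fun _ _ => sq_nonneg _), Real.sqrt_eq_rpow]
      norm_num

end l4Aux
section traceAux
variable {m n : ℕ} {A : Matrix (Fin m) (Fin n) ℝ} {b : Fin m → ℝ} {x : Fin n → ℝ}

lemma projMat_trace (hrank : A.rank = n) (hx : ∀ i, b i < A.mulVec x i) :
    ∑ i, projMat m n A b x i i = (n : ℝ) := by
  have h1 : ∑ i, projMat m n A b x i i = Matrix.trace (projMat m n A b x) := by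
    simp [Matrix.trace, Matrix.diag]
  rw [h1]
  unfold projMat
  rw [Matrix.trace_mul_comm, ← Matrix.mul_assoc]
  have : (slackMat m n A b x)ᵀ * slackMat m n A b x = barrierG m n A b x := rfl
  rw [this, Matrix.trace_mul_comm, barrierG_inv_mul hrank hx, Matrix.trace_one]
  simp

lemma projMat_diag_eq (hrank : A.rank = n) (hx : ∀ i, b i < A.mulVec x i) (i : Fin m) :
    projMat m n A b x i i = ∑ j, (projMat m n A b x i j) ^ 2 := by
  conv_lhs => rw [← projMat_idem hrank hx]
  rw [Matrix.mul_apply]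
  refine Finset.sum_congr rfl fun j _ => ?_
  have hsymm := congrFun (congrFun (projMat_symm (A := A) (b := b) (x := x)) i) j
  rw [Matrix.transpose_apply] at hsymm
  rw [hsymm]; ring

lemma projMat_diag_nonneg (hrank : A.rank = n) (hx : ∀ i, b i < A.mulVec x i) (i : Fin m) :
    0 ≤ projMat m n A b x i i := by
  rw [projMat_diag_eq hrank hx]
  exact Finset.sum_nonneg fun _ _ => sq_nonneg _

lemma projMat_diag_sq_sum (hrank : A.rank = n) (hx : ∀ i, b i < A.mulVec x i) :
    ∑ i, (projMat m n A b x i i) ^ 2 ≤ (n : ℝ) := by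
  rw [← projMat_trace hrank hx]
  refine Finset.sum_le_sum fun i _ => ?_
  conv_rhs => rw [projMat_diag_eq hrank hx]
  exact Finset.single_le_sum (f := fun j => projMat m n A b x i j ^ 2) (fun j _ => sq_nonneg _) (Finset.mem_univ i)

/-- `zᵀ G z = ∑ (A_x z)_i²`. -/
lemma quad_eq_sum (z : Fin n → ℝ) :
    z ⬝ᵥ (barrierG m n A b x).mulVec z = ∑ i, ((slackMat m n A b x).mulVec z i) ^ 2 := by
  have := dot_mulVec_self (slackMat m n A b x) z
  have h2 : (slackMat m n A b x).mulVec z ⬝ᵥ (slackMat m n A b x).mulVec z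
      = ∑ i, ((slackMat m n A b x).mulVec z i) ^ 2 := by
    simp [dotProduct, sq]
  rw [← h2, this]; rfl

/-- `‖A_x G⁻¹ y‖² = yᵀ G⁻¹ y`. -/
lemma grad_term_sq (hrank : A.rank = n) (hx : ∀ i, b i < A.mulVec x i) (y : Fin n → ℝ) :
    ∑ i, ((slackMat m n A b x).mulVec ((barrierG m n A b x)⁻¹.mulVec y) i) ^ 2
      = y ⬝ᵥ (barrierG m n A b x)⁻¹.mulVec y := by
  rw [← quad_eq_sum]
  have hGz : (barrierG m n A b x).mulVec ((barrierG m n A b x)⁻¹.mulVec y) = y := by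
    rw [Matrix.mulVec_mulVec, barrierG_mul_inv hrank hx, Matrix.one_mulVec]
  rw [hGz, dotProduct_comm]

end traceAux
noncomputable def wf (m n : ℕ) (A : Matrix (Fin m) (Fin n) ℝ) (b : Fin m → ℝ)
    (γ γ' : ℝ → Fin n → ℝ) (s : ℝ) : Fin m → ℝ :=
  (slackMat m n A b (γ s)).mulVec (γ' s)

noncomputable def wd (m n : ℕ) (A : Matrix (Fin m) (Fin n) ℝ) (b : Fin m → ℝ)
    (γ γ' γ'' : ℝ → Fin n → ℝ) (s : ℝ) : Fin m → ℝ :=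
  fun i => (slackMat m n A b (γ s)).mulVec (γ'' s) i - (wf m n A b γ γ' s i) ^ 2

section derivAux
variable {m n : ℕ} {A : Matrix (Fin m) (Fin n) ℝ} {b : Fin m → ℝ}
  {γ γ' γ'' : ℝ → Fin n → ℝ} {t : ℝ}

lemma wf_hasDerivAt (hs : ∀ i, 0 < A.mulVec (γ t) i - b i)
    (h1 : ∀ k, HasDerivAt (fun s => γ s k) (γ' t k) t)
    (h2 : ∀ k, HasDerivAt (fun s => γ' s k) (γ'' t k) t) (i : Fin m) :
    HasDerivAt (fun s => wf m n A b γ γ' s i) (wd m n A b γ γ' γ'' t i) t := by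
  have hnum : HasDerivAt (fun s => ∑ j, A i j * γ' s j) (∑ j, A i j * γ'' t j) t :=
    HasDerivAt.fun_sum fun j _ => (h2 j).const_mul (A i j)
  have hden : HasDerivAt (fun s => (∑ j, A i j * γ s j) - b i) (∑ j, A i j * γ' t j) t :=
    (HasDerivAt.fun_sum fun j _ => (h1 j).const_mul (A i j)).sub_const (b i)
  have hAi : ∀ v : Fin n → ℝ, A.mulVec v i = ∑ j, A i j * v j := fun v => rfl
  have hne : (∑ j, A i j * γ t j) - b i ≠ 0 := by
    have := hs i; rw [hAi] at this; linarith
  have hdiv := hnum.fun_div hden hne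
  have hfun : (fun s => wf m n A b γ γ' s i)
      = fun s => (∑ j, A i j * γ' s j) / ((∑ j, A i j * γ s j) - b i) := by
    funext s
    rw [wf, slack_mulVec_eq, hAi, hAi]
  rw [hfun]
  refine hdiv.congr_deriv ?_
  rw [show wd m n A b γ γ' γ'' t i = (slackMat m n A b (γ t)).mulVec (γ'' t) i - (wf m n A b γ γ' t i) ^ 2 from rfl, slack_mulVec_eq, hAi, wf, slack_mulVec_eq, hAi, hAi]
  field_simp

end derivAux
section coreAux
variable {m n : ℕ} {A : Matrix (Fin m) (Fin n) ℝ} {b : Fin m → ℝ} {x : Fin n → ℝ}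

lemma ode_decomp (z : Fin m → ℝ) :
    (slackMat m n A b x).mulVec ((barrierG m n A b x)⁻¹.mulVec
      ((slackMat m n A b x)ᵀ.mulVec z)) = (projMat m n A b x).mulVec z := by
  rw [Matrix.mulVec_mulVec, Matrix.mulVec_mulVec]; rfl

lemma slack_mulVec_driftMu (f : (Fin n → ℝ) → ℝ) :
    (slackMat m n A b x).mulVec (driftMu m n A b f x)
      = (projMat m n A b x).mulVec (fun j => projMat m n A b x j j)
        - (slackMat m n A b x).mulVec
            ((barrierG m n A b x)⁻¹.mulVec (fun k => fderiv ℝ f x (Pi.single k 1))) := by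
  unfold driftMu
  rw [Matrix.mulVec_sub, ode_decomp]

lemma sigma_term_bound (hrank : A.rank = n) (hx : ∀ i, b i < A.mulVec x i) :
    e2' ((projMat m n A b x).mulVec (fun j => projMat m n A b x j j)) ≤ Real.sqrt n := by
  refine le_trans ((proj_contract_aux _ projMat_symm (projMat_idem hrank hx) _).1) ?_
  exact e2'_le_sqrt _ _ (projMat_diag_sq_sum hrank hx)

lemma grad_term_bound (hrank : A.rank = n) (hx : ∀ i, b i < A.mulVec x i)
    {M₁ : ℝ} (y : Fin n → ℝ) (hy : y ⬝ᵥ (barrierG m n A b x)⁻¹.mulVec y ≤ M₁) :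
    e2' ((slackMat m n A b x).mulVec ((barrierG m n A b x)⁻¹.mulVec y)) ≤ Real.sqrt M₁ := by
  apply e2'_le_sqrt
  rw [grad_term_sq hrank hx]
  exact hy

lemma core_est (hrank : A.rank = n) (hx : ∀ i, b i < A.mulVec x i)
    {f : (Fin n → ℝ) → ℝ} {M₁ : ℝ}
    (hy : (fun k => fderiv ℝ f x (Pi.single k 1)) ⬝ᵥ
        (barrierG m n A b x)⁻¹.mulVec (fun k => fderiv ℝ f x (Pi.single k 1)) ≤ M₁)
    (v : Fin m → ℝ) :
    e2' (fun i => ((projMat m n A b x).mulVec (fun j => v j ^ 2) i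
        + (slackMat m n A b x).mulVec (driftMu m n A b f x) i) - v i ^ 2)
      ≤ (l4norm v) ^ 2 + Real.sqrt n + Real.sqrt M₁ ∧
    e2' (fun i => (projMat m n A b x).mulVec (fun j => v j ^ 2) i
        + (slackMat m n A b x).mulVec (driftMu m n A b f x) i)
      ≤ (l4norm v) ^ 2 + Real.sqrt n + Real.sqrt M₁ := by
  have hμ := slack_mulVec_driftMu (A := A) (b := b) (x := x) f
  set Pm := projMat m n A b x with hPm
  set σv : Fin m → ℝ := fun j => Pm j j with hσv
  set g2 := (slackMat m n A b x).mulVec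
      ((barrierG m n A b x)⁻¹.mulVec (fun k => fderiv ℝ f x (Pi.single k 1))) with hg2
  have hb2 : e2' (Pm.mulVec σv) ≤ Real.sqrt n := sigma_term_bound hrank hx
  have hb3 : e2' g2 ≤ Real.sqrt M₁ := grad_term_bound hrank hx _ hy
  have hb3' : e2' (fun i => - g2 i) ≤ Real.sqrt M₁ := by rw [e2'_neg]; exact hb3
  have hb1a : e2' (fun i => Pm.mulVec (fun j => v j ^ 2) i - (fun j => v j ^ 2) i)
      ≤ l4norm v ^ 2 := by
    refine le_trans ((proj_contract_aux _ projMat_symm (projMat_idem hrank hx) _).2) ?_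
    rw [l4_sq]
  have hb1b : e2' (Pm.mulVec (fun j => v j ^ 2)) ≤ l4norm v ^ 2 := by
    refine le_trans ((proj_contract_aux _ projMat_symm (projMat_idem hrank hx) _).1) ?_
    rw [l4_sq]
  constructor
  · have hshape : (fun i => (Pm.mulVec (fun j => v j ^ 2) i
        + (slackMat m n A b x).mulVec (driftMu m n A b f x) i) - v i ^ 2)
        = fun i => (Pm.mulVec (fun j => v j ^ 2) i - (fun j => v j ^ 2) i)
            + Pm.mulVec σv i + (- g2 i) := by
      funext i
      have := congrFun hμ i
      rw [this]
      simp only [Pi.sub_apply]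
      ring
    rw [hshape]
    calc e2' _ ≤ e2' (fun i => Pm.mulVec (fun j => v j ^ 2) i - (fun j => v j ^ 2) i)
        + e2' (Pm.mulVec σv) + e2' (fun i => - g2 i) := e2'_triangle3 _ _ _
    _ ≤ l4norm v ^ 2 + Real.sqrt n + Real.sqrt M₁ := by
        gcongr
  · have hshape : (fun i => Pm.mulVec (fun j => v j ^ 2) i
        + (slackMat m n A b x).mulVec (driftMu m n A b f x) i)
        = fun i => Pm.mulVec (fun j => v j ^ 2) i + Pm.mulVec σv i + (- g2 i) := by
      funext i
      have := congrFun hμ i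
      rw [this]
      simp only [Pi.sub_apply]
      ring
    rw [hshape]
    calc e2' _ ≤ e2' (Pm.mulVec (fun j => v j ^ 2))
        + e2' (Pm.mulVec σv) + e2' (fun i => - g2 i) := e2'_triangle3 _ _ _
    _ ≤ l4norm v ^ 2 + Real.sqrt n + Real.sqrt M₁ := by
        gcongr
end coreAux
noncomputable def uf (m n : ℕ) (A : Matrix (Fin m) (Fin n) ℝ) (b : Fin m → ℝ)
    (γ γ' : ℝ → Fin n → ℝ) (s : ℝ) : ℝ :=
  l4norm (wf m n A b γ γ' s)

instance fact14 : Fact ((1:ENNReal) ≤ 4) := ⟨by norm_num⟩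

lemma l4norm_eq_norm {m : ℕ} (v : Fin m → ℝ) :
    ‖(WithLp.equiv 4 (Fin m → ℝ)).symm v‖ = l4norm v := by
  rw [PiLp.norm_eq_sum (p := 4) (by norm_num)]
  unfold l4norm
  norm_num

lemma hasDerivAt_l4 {m : ℕ} (w : ℝ → Fin m → ℝ) (dw : Fin m → ℝ) (t : ℝ)
    (h : ∀ i, HasDerivAt (fun s => w s i) (dw i) t) :
    HasDerivAt (fun s => (WithLp.equiv 4 (Fin m → ℝ)).symm (w s))
      ((WithLp.equiv 4 (Fin m → ℝ)).symm dw) t := by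
  have hw : HasDerivAt w dw t := hasDerivAt_pi.mpr h
  exact ((PiLp.continuousLinearEquiv 4 ℝ (fun _ : Fin m => ℝ)).symm.hasFDerivAt).comp_hasDerivAt t hw

lemma num3 (a q : ℝ) (ha : 0 ≤ a) (hq : 0 ≤ q) :
    (((7*a+2*q)/5)^2 + 2*q^2)^2 ≤ 128*a^4 + 30*q^4 := by
  nlinarith [sq_nonneg (a-q), sq_nonneg (a+q), sq_nonneg (a*q), sq_nonneg (a^2-q^2),
    sq_nonneg (a^2+q^2), mul_nonneg ha hq, sq_nonneg (a*q - q^2), sq_nonneg (a^2 - a*q),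
    mul_nonneg (mul_nonneg ha ha) (mul_nonneg hq hq),
    mul_nonneg (mul_nonneg ha hq) (mul_nonneg hq hq),
    mul_nonneg (mul_nonneg ha ha) (mul_nonneg ha hq)]

lemma num2 (a q : ℝ) (ha : 0 ≤ a) (hq : 0 ≤ q) (hc : 0 < a + q) :
    (((7*a+2*q)/5)^2 + 2*q^2) * (1/(12*(a+q))) < (2*(a+q))/5 := by
  rw [mul_one_div, div_lt_div_iff₀ (by positivity) (by norm_num)]
  nlinarith [sq_nonneg (a-q), sq_nonneg (a+q), mul_nonneg ha hq]
/-- ℓ₄-stability of the Hamiltonian flow for the log-barrier metric. -/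
theorem hamiltonian_flow_l4_stability
    (m n : ℕ) (A : Matrix (Fin m) (Fin n) ℝ) (b : Fin m → ℝ)
    (hrank : A.rank = n)
    (P : Set (Fin n → ℝ)) (hP : P = {x | ∀ i, b i < A.mulVec x i})
    (hPne : P.Nonempty)
    (f : (Fin n → ℝ) → ℝ) (hf : ContDiffOn ℝ (⊤ : ℕ∞) f P)
    (M₁ : ℝ) (hM₁n : (n : ℝ) ≤ M₁)
    (hM₁ : ∀ x ∈ P,
      (fun k => fderiv ℝ f x (Pi.single k 1)) ⬝ᵥ
          (barrierG m n A b x)⁻¹.mulVec (fun k => fderiv ℝ f x (Pi.single k 1)) ≤ M₁)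
    (T : ℝ) (hT : 0 ≤ T)
    (γ γ' γ'' : ℝ → Fin n → ℝ)
    (hγP : ∀ t ∈ Icc 0 T, γ t ∈ P)
    (hd1 : ∀ t ∈ Icc 0 T, ∀ k, HasDerivAt (fun s => γ s k) (γ' t k) t)
    (hd2 : ∀ t ∈ Icc 0 T, ∀ k, HasDerivAt (fun s => γ' s k) (γ'' t k) t)
    (hode : ∀ t ∈ Icc 0 T, γ'' t =
      (barrierG m n A b (γ t))⁻¹.mulVec
          ((slackMat m n A b (γ t))ᵀ.mulVec (fun i =>
            ((slackMat m n A b (γ t)).mulVec (γ' t) i) ^ 2))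
        + driftMu m n A b f (γ t))
    (v₄ : ℝ) (hv₄ : v₄ = l4norm ((slackMat m n A b (γ 0)).mulVec (γ' 0))) :
    ∀ t : ℝ, 0 ≤ t → t ≤ min T (1 / (12 * (v₄ + M₁ ^ ((1:ℝ)/4)))) →
      l4norm ((slackMat m n A b (γ t)).mulVec (γ' t)) ≤ 2 * v₄ + M₁ ^ ((1:ℝ)/4) ∧
      (γ'' t) ⬝ᵥ (barrierG m n A b (γ t)).mulVec (γ'' t) ≤ 128 * v₄ ^ 4 + 30 * M₁ := by
  have hM₁0 : (0:ℝ) ≤ M₁ := le_trans (Nat.cast_nonneg n) hM₁n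
  set q : ℝ := M₁ ^ ((1:ℝ)/4) with hqdef
  have hq0 : 0 ≤ q := Real.rpow_nonneg hM₁0 _
  clear_value q
  have hsqM : Real.sqrt M₁ = q ^ 2 := by
    rw [hqdef, Real.sqrt_eq_rpow, ← Real.rpow_natCast (M₁ ^ ((1:ℝ)/4)) 2,
      ← Real.rpow_mul hM₁0]
    norm_num
  have hq4 : q ^ 4 = M₁ := by
    rw [hqdef, ← Real.rpow_natCast (M₁ ^ ((1:ℝ)/4)) 4, ← Real.rpow_mul hM₁0]
    norm_num
  have hsqn : Real.sqrt n ≤ q ^ 2 := by rw [← hsqM]; exact Real.sqrt_le_sqrt hM₁n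
  have hsqn0 : 0 ≤ Real.sqrt (n:ℝ) := Real.sqrt_nonneg _
  have hsqM0 : 0 ≤ Real.sqrt M₁ := Real.sqrt_nonneg _
  have hγPs : ∀ s ∈ Icc (0:ℝ) T, ∀ i, b i < A.mulVec (γ s) i := by
    intro s hs
    have := hγP s hs
    rw [hP] at this
    exact this
  have hslack : ∀ s ∈ Icc (0:ℝ) T, ∀ i, 0 < A.mulVec (γ s) i - b i := fun s hs i =>
    sub_pos.2 (hγPs s hs i)
  have hu0 : uf m n A b γ γ' 0 = v₄ := hv₄.symm
  have hunn : ∀ s, 0 ≤ uf m n A b γ γ' s := fun s => l4norm_nonneg _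
  have ha0 : 0 ≤ v₄ := hu0 ▸ hunn 0
  have hwd : ∀ s ∈ Icc (0:ℝ) T, ∀ i, HasDerivAt (fun r => wf m n A b γ γ' r i)
      (wd m n A b γ γ' γ'' s i) s := fun s hs i =>
    wf_hasDerivAt (hslack s hs) (hd1 s hs) (hd2 s hs) i
  have hucont : ∀ s ∈ Icc (0:ℝ) T, ContinuousAt (uf m n A b γ γ') s := by
    intro s hs
    have hwc : ContinuousAt (fun r => wf m n A b γ γ' r) s :=
      continuousAt_pi.mpr fun i => (hwd s hs i).continuousAt
    have houter : Continuous (fun v : Fin m → ℝ => ∑ i, |v i| ^ 4) :=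
      continuous_finset_sum _ fun i _ => ((continuous_apply i).abs.pow 4)
    have hsum : ContinuousAt (fun r => ∑ i, |wf m n A b γ γ' r i| ^ 4) s :=
      houter.continuousAt.comp hwc
    unfold uf l4norm
    exact hsum.rpow_const (Or.inr (by norm_num))
  have hdecomp : ∀ s ∈ Icc (0:ℝ) T, (slackMat m n A b (γ s)).mulVec (γ'' s)
      = fun i => (projMat m n A b (γ s)).mulVec (fun j => (wf m n A b γ γ' s j) ^ 2) i
          + (slackMat m n A b (γ s)).mulVec (driftMu m n A b f (γ s)) i := by
    intro s hs
    funext i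
    rw [hode s hs, Matrix.mulVec_add, ode_decomp]
    rfl
  have hWd : ∀ s ∈ Icc (0:ℝ) T,
      ‖(WithLp.equiv 4 (Fin m → ℝ)).symm (wd m n A b γ γ' γ'' s)‖
        ≤ uf m n A b γ γ' s ^ 2 + Real.sqrt n + Real.sqrt M₁ := by
    intro s hs
    rw [l4norm_eq_norm]
    refine le_trans (l4_le_e2 _) ?_
    have hce := (core_est hrank (hγPs s hs) (hM₁ (γ s) (hγP s hs)) (wf m n A b γ γ' s)).1
    have hsh : wd m n A b γ γ' γ'' s = fun i =>
        ((projMat m n A b (γ s)).mulVec (fun j => (wf m n A b γ γ' s j) ^ 2) i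
          + (slackMat m n A b (γ s)).mulVec (driftMu m n A b f (γ s)) i)
          - (wf m n A b γ γ' s i) ^ 2 := by
      funext i
      show (slackMat m n A b (γ s)).mulVec (γ'' s) i - wf m n A b γ γ' s i ^ 2 = _
      rw [hdecomp s hs]
    rw [hsh]
    exact hce
  have hPB : ∀ s ∈ Icc (0:ℝ) T, γ'' s ⬝ᵥ (barrierG m n A b (γ s)).mulVec (γ'' s)
      ≤ (uf m n A b γ γ' s ^ 2 + Real.sqrt n + Real.sqrt M₁) ^ 2 := by
    intro s hs
    rw [quad_eq_sum]
    have h1 : e2' ((slackMat m n A b (γ s)).mulVec (γ'' s))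
        ≤ uf m n A b γ γ' s ^ 2 + Real.sqrt n + Real.sqrt M₁ := by
      rw [hdecomp s hs]
      exact (core_est hrank (hγPs s hs) (hM₁ (γ s) (hγP s hs)) (wf m n A b γ γ' s)).2
    calc ∑ i, ((slackMat m n A b (γ s)).mulVec (γ'' s) i) ^ 2
        = e2' ((slackMat m n A b (γ s)).mulVec (γ'' s)) ^ 2 := (e2'_sq _).symm
    _ ≤ (uf m n A b γ γ' s ^ 2 + Real.sqrt n + Real.sqrt M₁) ^ 2 :=
        pow_le_pow_left₀ (e2'_nonneg _) h1 2
  intro t ht0 ht1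
  by_cases hc : 0 < v₄ + q
  · -- main case
    obtain ⟨τ, hτdef⟩ : ∃ τ, τ = min T (1 / (12 * (v₄ + q))) := ⟨_, rfl⟩
    rw [← hτdef] at ht1
    have hτ0 : 0 ≤ τ := by rw [hτdef]; exact le_min hT (by positivity)
    have hτT : τ ≤ T := by rw [hτdef]; exact min_le_left _ _
    have hτh : τ ≤ 1 / (12 * (v₄ + q)) := by rw [hτdef]; exact min_le_right _ _
    obtain ⟨D, hD⟩ : ∃ D, D = (7*v₄ + 2*q)/5 := ⟨_, rfl⟩
    have hD0 : 0 ≤ D := by rw [hD]; positivity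
    have haD : v₄ ≤ D := by rw [hD]; linarith
    obtain ⟨C₀, hC₀⟩ : ∃ C₀, C₀ = D^2 + 2*q^2 := ⟨_, rfl⟩
    have hC₀0 : 0 ≤ C₀ := by rw [hC₀, hD]; positivity
    have hMVI : ∀ t' ∈ Icc 0 τ, (∀ s ∈ Icc 0 t', uf m n A b γ γ' s ≤ D) →
        ∀ s ∈ Icc 0 t', uf m n A b γ γ' s ≤ v₄ + C₀ * s := by
      intro t' ht' hbd s hs
      have hIsub : Icc (0:ℝ) s ⊆ Icc 0 T :=
        Icc_subset_Icc le_rfl (le_trans hs.2 (le_trans ht'.2 hτT))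
      have hIsub' : Icc (0:ℝ) s ⊆ Icc 0 t' := Icc_subset_Icc le_rfl hs.2
      have hmvi := Convex.norm_image_sub_le_of_norm_hasDerivWithin_le
        (f := fun r => (WithLp.equiv 4 (Fin m → ℝ)).symm (wf m n A b γ γ' r))
        (f' := fun r => (WithLp.equiv 4 (Fin m → ℝ)).symm (wd m n A b γ γ' γ'' r))
        (s := Icc (0:ℝ) s) (C := C₀)
        (fun r hr => (hasDerivAt_l4 _ _ r (fun i => hwd r (hIsub hr) i)).hasDerivWithinAt)
        (fun r hr => by
          refine le_trans (hWd r (hIsub hr)) ?_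
          have hur : uf m n A b γ γ' r ≤ D := hbd r (hIsub' hr)
          have h2 : uf m n A b γ γ' r ^ 2 ≤ D ^ 2 := pow_le_pow_left₀ (hunn r) hur 2
          rw [hC₀, hsqM]
          linarith [hsqn])
        (convex_Icc 0 s) (left_mem_Icc.mpr hs.1) ⟨hs.1, le_refl s⟩
      have hns : ‖s - 0‖ = s := by
        rw [sub_zero, Real.norm_eq_abs, abs_of_nonneg hs.1]
      rw [hns] at hmvi
      have e1 : ‖(WithLp.equiv 4 (Fin m → ℝ)).symm (wf m n A b γ γ' s)‖
          = uf m n A b γ γ' s := l4norm_eq_norm _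
      have e2 : ‖(WithLp.equiv 4 (Fin m → ℝ)).symm (wf m n A b γ γ' 0)‖
          = uf m n A b γ γ' 0 := l4norm_eq_norm _
      have htri := norm_sub_norm_le
        ((WithLp.equiv 4 (Fin m → ℝ)).symm (wf m n A b γ γ' s))
        ((WithLp.equiv 4 (Fin m → ℝ)).symm (wf m n A b γ γ' 0))
      rw [e1, e2, hu0] at htri
      linarith
    -- bootstrap
    obtain ⟨S, hS⟩ : ∃ S : Set ℝ,
        S = {r | r ∈ Icc 0 τ ∧ ∀ s ∈ Icc 0 r, uf m n A b γ γ' s ≤ D} := ⟨_, rfl⟩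
    have h0S : (0:ℝ) ∈ S := by
      rw [hS]
      refine ⟨⟨le_refl 0, hτ0⟩, fun s hs => ?_⟩
      have : s = 0 := le_antisymm hs.2 hs.1
      rw [this, hu0]; exact haD
    have hSbdd : BddAbove S := ⟨τ, fun r hr => by rw [hS] at hr; exact hr.1.2⟩
    have hSne : S.Nonempty := ⟨0, h0S⟩
    obtain ⟨σ, hσ⟩ : ∃ σ, σ = sSup S := ⟨_, rfl⟩
    have hσ0 : 0 ≤ σ := by rw [hσ]; exact le_csSup hSbdd h0S
    have hστ : σ ≤ τ := by
      rw [hσ]; exact csSup_le hSne fun r hr => by rw [hS] at hr; exact hr.1.2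
    have hAlt : ∀ s, 0 ≤ s → s < σ → uf m n A b γ γ' s ≤ D := by
      intro s hs0 hsσ
      rw [hσ] at hsσ
      obtain ⟨r, hrS, hsr⟩ := exists_lt_of_lt_csSup hSne hsσ
      rw [hS] at hrS
      exact hrS.2 s ⟨hs0, le_of_lt hsr⟩
    have hAσ : uf m n A b γ γ' σ ≤ D := by
      rcases eq_or_lt_of_le hσ0 with h0 | h0
      · rw [← h0, hu0]; exact haD
      · have hcont : ContinuousAt (uf m n A b γ γ') σ :=
          hucont σ ⟨hσ0, le_trans hστ hτT⟩
        haveI hne : (𝓝[Ico (0:ℝ) σ] σ).NeBot := by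
          rw [← mem_closure_iff_nhdsWithin_neBot, closure_Ico (ne_of_lt h0)]
          exact ⟨hσ0, le_refl σ⟩
        refine le_of_tendsto (hcont.continuousWithinAt (s := Ico (0:ℝ) σ)) ?_
        exact eventually_nhdsWithin_of_forall (fun s hs => hAlt s hs.1 hs.2)
    have hAfull : ∀ s ∈ Icc 0 σ, uf m n A b γ γ' s ≤ D := by
      intro s hs
      rcases eq_or_lt_of_le hs.2 with he | hl
      · rw [he]; exact hAσ
      · exact hAlt s hs.1 hl
    have hστeq : σ = τ := by
      by_contra hne'
      have hστ' : σ < τ := lt_of_le_of_ne hστ hne'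
      have huσ : uf m n A b γ γ' σ < D := by
        have h1 : uf m n A b γ γ' σ ≤ v₄ + C₀ * σ :=
          hMVI σ ⟨hσ0, hστ⟩ hAfull σ ⟨hσ0, le_refl σ⟩
        have h2 : C₀ * σ ≤ C₀ * (1/(12*(v₄+q))) :=
          mul_le_mul_of_nonneg_left (le_trans hστ hτh) hC₀0
        have h3 : C₀ * (1/(12*(v₄+q))) < 2*(v₄+q)/5 := by
          rw [hC₀, hD]
          exact num2 v₄ q ha0 hq0 hc
        have hDv : D = v₄ + 2*(v₄+q)/5 := by rw [hD]; ring
        linarith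
      have hcont : ContinuousAt (uf m n A b γ γ') σ :=
        hucont σ ⟨hσ0, le_trans hστ hτT⟩
      have hev : (uf m n A b γ γ') ⁻¹' (Iio D) ∈ 𝓝 σ := hcont (Iio_mem_nhds huσ)
      obtain ⟨δ, hδ0, hball⟩ := Metric.mem_nhds_iff.mp hev
      obtain ⟨t₁, ht₁⟩ : ∃ t₁, t₁ = min τ (σ + δ/2) := ⟨_, rfl⟩
      have ht₁σ : σ < t₁ := by rw [ht₁]; exact lt_min hστ' (by linarith)
      have ht₁τ : t₁ ≤ τ := by rw [ht₁]; exact min_le_left _ _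
      have ht₁δ : t₁ ≤ σ + δ/2 := by rw [ht₁]; exact min_le_right _ _
      have ht₁S : t₁ ∈ S := by
        rw [hS]
        refine ⟨⟨le_trans hσ0 (le_of_lt ht₁σ), ht₁τ⟩, ?_⟩
        intro s hs
        rcases le_or_gt s σ with h | h
        · exact hAfull s ⟨hs.1, h⟩
        · apply le_of_lt
          apply hball
          rw [Metric.mem_ball, Real.dist_eq, abs_of_nonneg (by linarith)]
          have : s ≤ σ + δ/2 := le_trans hs.2 ht₁δ
          linarith
      have := le_csSup hSbdd ht₁S
      rw [← hσ] at this
      exact absurd this (not_le.mpr ht₁σ)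
    have hmain : uf m n A b γ γ' t ≤ D := by
      rw [hστeq] at hAfull
      exact hAfull t ⟨ht0, ht1⟩
    constructor
    · show uf m n A b γ γ' t ≤ 2 * v₄ + q
      rw [hD] at hmain
      linarith
    · have hPBt := hPB t ⟨ht0, le_trans ht1 hτT⟩
      have h0X : 0 ≤ uf m n A b γ γ' t ^ 2 + Real.sqrt n + Real.sqrt M₁ := by
        have := sq_nonneg (uf m n A b γ γ' t); linarith
      have hX : uf m n A b γ γ' t ^ 2 + Real.sqrt n + Real.sqrt M₁ ≤ D^2 + 2*q^2 := by
        have h2 : uf m n A b γ γ' t ^ 2 ≤ D ^ 2 := pow_le_pow_left₀ (hunn t) hmain 2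
        rw [hsqM]
        linarith [hsqn]
      calc γ'' t ⬝ᵥ (barrierG m n A b (γ t)).mulVec (γ'' t)
          ≤ (uf m n A b γ γ' t ^ 2 + Real.sqrt n + Real.sqrt M₁) ^ 2 := hPBt
      _ ≤ (D^2 + 2*q^2)^2 := pow_le_pow_left₀ h0X hX 2
      _ ≤ 128*v₄^4 + 30*q^4 := by rw [hD]; exact num3 v₄ q ha0 hq0
      _ = 128 * v₄ ^ 4 + 30 * M₁ := by rw [hq4]
  · -- degenerate case : v₄ + q = 0
    have hc0 : v₄ + q = 0 := le_antisymm (not_lt.mp hc) (by positivity)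
    have hv0 : v₄ = 0 := by linarith
    have hqz : q = 0 := by linarith
    have hM0 : M₁ = 0 := by rw [← hq4, hqz]; ring
    have ht1' : t ≤ 0 := by
      rw [hc0] at ht1
      simpa [hT, min_eq_right] using ht1
    have hteq : t = 0 := le_antisymm ht1' ht0
    subst hteq
    constructor
    · show uf m n A b γ γ' 0 ≤ 2 * v₄ + q
      rw [hu0]
      linarith
    · have hPBt := hPB 0 ⟨le_refl 0, hT⟩
      have hsn0 : Real.sqrt (n:ℝ) = 0 := by
        have : Real.sqrt (n:ℝ) ≤ 0 := by rw [hqz] at hsqn; simpa using hsqn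
        linarith
      rw [hu0, hv0, hsn0, hsqM, hqz] at hPBt
      norm_num at hPBt
      rw [hv0, hM0]
      norm_num
      exact hPBt
end
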